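/- arXiv:2510.07744 — 2 statements merged into one kernel-verified Lean document; each statement's English description precedes it below -/
import Mathlib

section
/- Let S = stack(P,Q) ∈ SYT^stacked(2r×c) where P, Q ∈ SYT(r×c) and n = rc, and let ρ_i := prom_i(S) ∈ S_{2n} for 1 ≤ i ≤ 2r−1. Then for all 0 ≤ k ≤ r−1, the point set 𝒫^NE(ρ_{r−k}) equals the k-th iterated skeleton 𝒮^k(𝒫^NE(ρ_r), ↙) with respect to light shining southwest. -/
namespace PromRS

/-! ## Rectangular standard Young tableaux (as functions; 0-indexed cells; entries 1..R*C) -/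

/-- `T` is a standard Young tableau of rectangular shape with `R` rows and `C` columns:
rows and columns strictly increase, and the entries on the `R × C` rectangle are a
bijection onto `{1, …, R*C}`. -/
def IsSYT (R C : ℕ) (T : ℕ → ℕ → ℕ) : Prop :=
  (∀ i j, i < R → j + 1 < C → T i j < T i (j + 1)) ∧
  (∀ i j, i + 1 < R → j < C → T i j < T (i + 1) j) ∧
  Set.BijOn (fun p : ℕ × ℕ => T p.1 p.2) {p : ℕ × ℕ | p.1 < R ∧ p.2 < C} (Set.Icc 1 (R * C))

/-- Stacking: add `r*c` to every entry of `Q` and place the result below `P`. -/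
def stack (r c : ℕ) (P Q : ℕ → ℕ → ℕ) : ℕ → ℕ → ℕ := fun i j =>
  if i < r then P i j else Q (i - r) j + r * c

/-! ## Gromotion and promotion permutations -/

/-- Value of `T` at a cell, with `⊤` outside the `R × C` rectangle. -/
def ext (R C : ℕ) (T : ℕ → ℕ → ℕ) (p : ℕ × ℕ) : WithTop ℕ :=
  if p.1 < R ∧ p.2 < C then ((T p.1 p.2 : ℕ) : WithTop ℕ) else ⊤

/-- The jeu de taquin slide moves the empty cell to the smaller of its east/south neighbors. -/
def nextCell (R C : ℕ) (T : ℕ → ℕ → ℕ) (p : ℕ × ℕ) : ℕ × ℕ :=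
  if ext R C T (p.1, p.2 + 1) < ext R C T (p.1 + 1, p.2) then (p.1, p.2 + 1)
  else (p.1 + 1, p.2)

/-- The sliding path of the empty cell, starting at the top-left corner. -/
def slidePath (R C : ℕ) (T : ℕ → ℕ → ℕ) : ℕ → ℕ × ℕ
  | 0 => (0, 0)
  | k + 1 => nextCell R C T (slidePath R C T k)

def maxEntry (R C : ℕ) (T : ℕ → ℕ → ℕ) : ℕ :=
  ((Finset.range R) ×ˢ (Finset.range C)).sup fun p => T p.1 p.2

/-- Gromotion: delete the minimal entry (at the top-left corner), rectify by jeu de taquin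
slides, and fill the vacated outer corner with (current maximum) + 1; entries are not
decremented. -/
def gromotion (R C : ℕ) (T : ℕ → ℕ → ℕ) : ℕ → ℕ → ℕ := fun i j =>
  if i = R - 1 ∧ j = C - 1 then maxEntry R C T + 1
  else
    match (List.range (R + C - 2)).find? (fun k => decide (slidePath R C T k = (i, j))) with
    | some k => T (slidePath R C T (k + 1)).1 (slidePath R C T (k + 1)).2
    | none => T i j

/-- The entry that slides (up) into row `i` (1-indexed) during one gromotion slide of `T`:
the value of `T` at the first cell of the sliding path lying in 0-indexed row `i`. -/
def slideInto (R C : ℕ) (T : ℕ → ℕ → ℕ) (i : ℕ) : ℕ :=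
  match (List.range (R + C - 1)).find? (fun k => decide ((slidePath R C T k).1 = i)) with
  | some k => T (slidePath R C T k).1 (slidePath R C T k).2
  | none => 0

/-- The `i`-th promotion permutation of `T ∈ SYT(R × C)`: its value at `j` is the entry
that slides into row `i` when computing `gromotion^j(T)`, taken modulo `R*C` with
residues in `{1, …, R*C}`. -/
def promPerm (R C : ℕ) (T : ℕ → ℕ → ℕ) (i : ℕ) : ℕ → ℕ := fun j =>
  (slideInto R C ((gromotion R C)^[j - 1] T) i - 1) % (R * C) + 1

/-! ## Tableaux as lists of rows, Robinson–Schensted insertion -/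

/-- Entry of a list-of-rows tableau (0-indexed; `0` outside). -/
def entryL (T : List (List ℕ)) (i j : ℕ) : ℕ := (T.getD i []).getD j 0

/-- Convert a function tableau on an `R × C` rectangle to a list of rows. -/
def toListT (R C : ℕ) (T : ℕ → ℕ → ℕ) : List (List ℕ) :=
  (List.range R).map fun i => (List.range C).map fun j => T i j

/-- Transpose (conjugate) of a list-of-rows tableau. -/
def transposeT (T : List (List ℕ)) : List (List ℕ) :=
  (List.range (T.getD 0 []).length).map fun j => T.filterMap fun row => row[j]?

/-- Shape (row lengths) of a list-of-rows tableau. -/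
def shapeL (T : List (List ℕ)) : List ℕ := T.map List.length

/-- Standard Young tableau, as a list of rows: weakly decreasing nonempty row lengths,
rows and columns strictly increasing, and entries exactly `{1, …, N}` where `N` is the
number of cells. -/
def IsSYTList (T : List (List ℕ)) : Prop :=
  (∀ i, i + 1 < T.length → (T.getD (i + 1) []).length ≤ (T.getD i []).length) ∧
  (∀ row ∈ T, row ≠ []) ∧
  (∀ i j, i < T.length → j + 1 < (T.getD i []).length → entryL T i j < entryL T i (j + 1)) ∧
  (∀ i j, i + 1 < T.length → j < (T.getD (i + 1) []).length →
    entryL T i j < entryL T (i + 1) j) ∧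
  T.flatten.Nodup ∧ (∀ m, m ∈ T.flatten ↔ 1 ≤ m ∧ m ≤ T.flatten.length)

/-- Schensted row insertion of `x` into a tableau. -/
def rowInsert : List (List ℕ) → ℕ → List (List ℕ)
  | [], x => [[x]]
  | r :: rs, x =>
    match r.dropWhile (fun y => decide (y < x)) with
    | [] => (r ++ [x]) :: rs
    | y :: bs => (r.takeWhile (fun y => decide (y < x)) ++ x :: bs) :: rowInsert rs y

/-- The (0-indexed) row where the shape grew when passing from `P` to `P'`. -/
def rowOfNewCell (P P' : List (List ℕ)) : ℕ :=
  ((List.range P'.length).find? fun i =>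
    decide ((P'.getD i []).length ≠ (P.getD i []).length)).getD 0

def placeInRow (Q : List (List ℕ)) (r k : ℕ) : List (List ℕ) :=
  if r < Q.length then Q.set r (Q.getD r [] ++ [k]) else Q ++ [[k]]

/-- The Robinson–Schensted correspondence: the pair (insertion tableau, recording tableau)
of a word. -/
def RS (w : List ℕ) : List (List ℕ) × List (List ℕ) :=
  (List.range w.length).foldl
    (fun PQ i =>
      let P' := rowInsert PQ.1 (w.getD i 0)
      (P', placeInRow PQ.2 (rowOfNewCell PQ.1 P') (i + 1)))
    ([], [])

/-! ## Jeu de taquin on list tableaux; evacuation -/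

def extL (T : List (List ℕ)) (p : ℕ × ℕ) : WithTop ℕ :=
  if p.2 < (T.getD p.1 []).length then ((entryL T p.1 p.2 : ℕ) : WithTop ℕ) else ⊤

def nextCellL (T : List (List ℕ)) (p : ℕ × ℕ) : ℕ × ℕ :=
  if extL T (p.1, p.2 + 1) = ⊤ ∧ extL T (p.1 + 1, p.2) = ⊤ then p
  else if extL T (p.1, p.2 + 1) < extL T (p.1 + 1, p.2) then (p.1, p.2 + 1)
  else (p.1 + 1, p.2)

def jdtPath (T : List (List ℕ)) : ℕ → ℕ × ℕ
  | 0 => (0, 0)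
  | k + 1 => nextCellL T (jdtPath T k)

/-- The outer corner vacated when the minimal entry of `T` is deleted and the tableau is
rectified by jeu de taquin slides. -/
def vacated (T : List (List ℕ)) : ℕ × ℕ := jdtPath T T.flatten.length

/-- The value at cell `(i, j)` after the rectification slide. -/
def slidValue (T : List (List ℕ)) (i j : ℕ) : ℕ :=
  match (List.range T.flatten.length).find? (fun k =>
      decide (jdtPath T k = (i, j) ∧ jdtPath T (k + 1) ≠ (i, j))) with
  | some k => entryL T (jdtPath T (k + 1)).1 (jdtPath T (k + 1)).2
  | none => entryL T i j

/-- Delete the minimal entry of `T` and rectify. -/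
def delta (T : List (List ℕ)) : List (List ℕ) :=
  ((List.range T.length).map fun i =>
    (List.range ((T.getD i []).length - if i = (vacated T).1 then 1 else 0)).map fun j =>
      slidValue T i j).filter fun row => decide (row ≠ [])

/-- The entry of the evacuation `∂T` at cell `(i,j)`: `n + 1 - k` where the `k`-th
deletion-rectification vacates `(i,j)`. -/
def evacEntry (T : List (List ℕ)) (i j : ℕ) : ℕ :=
  match (List.range T.flatten.length).find? (fun k =>
      decide (vacated (delta^[k] T) = (i, j))) with
  | some k => T.flatten.length - k
  | none => 0

/-- Schützenberger evacuation `∂T` of a standard Young tableau. -/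
def evacL (T : List (List ℕ)) : List (List ℕ) :=
  (List.range T.length).map fun i =>
    (List.range (T.getD i []).length).map fun j => evacEntry T i j

/-! ## Shadow lines, skeleta, and Viennot's construction -/

def dirNE (a b : ℤ × ℤ) : Prop := a.1 ≤ b.1 ∧ a.2 ≤ b.2
def dirSE (a b : ℤ × ℤ) : Prop := a.1 ≤ b.1 ∧ b.2 ≤ a.2
def dirSW (a b : ℤ × ℤ) : Prop := b.1 ≤ a.1 ∧ b.2 ≤ a.2
def dirNW (a b : ℤ × ℤ) : Prop := b.1 ≤ a.1 ∧ a.2 ≤ b.2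

def minimalsUnder (d : ℤ × ℤ → ℤ × ℤ → Prop) (P : Set (ℤ × ℤ)) : Set (ℤ × ℤ) :=
  {p ∈ P | ∀ q ∈ P, d q p → q = p}

/-- `P` minus its first `j` shadow lines. -/
def shadowRest (d : ℤ × ℤ → ℤ × ℤ → Prop) (P : Set (ℤ × ℤ)) : ℕ → Set (ℤ × ℤ)
  | 0 => P
  | j + 1 => shadowRest d P j \ minimalsUnder d (shadowRest d P j)

/-- The `j`-th shadow line of `P` (1-indexed `j`). -/
def shadowLine (d : ℤ × ℤ → ℤ × ℤ → Prop) (P : Set (ℤ × ℤ)) (j : ℕ) : Set (ℤ × ℤ) :=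
  minimalsUnder d (shadowRest d P (j - 1))

/-- The skeleton of a single shadow line `L`: the minimal elements of the set of points
covered by the shadows of at least two points of `L`. -/
def lineSkeleton (d : ℤ × ℤ → ℤ × ℤ → Prop) (L : Set (ℤ × ℤ)) : Set (ℤ × ℤ) :=
  minimalsUnder d {x | ∃ p ∈ L, ∃ q ∈ L, p ≠ q ∧ d p x ∧ d q x}

/-- The skeleton of `P`: the union of the skeleta of its shadow lines. -/
def skeleton (d : ℤ × ℤ → ℤ × ℤ → Prop) (P : Set (ℤ × ℤ)) : Set (ℤ × ℤ) :=
  ⋃ j : ℕ, lineSkeleton d (shadowLine d P (j + 1))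

/-- The `k`-th iterated skeleton of `P`. -/
def skeletonIter (d : ℤ × ℤ → ℤ × ℤ → Prop) (P : Set (ℤ × ℤ)) (k : ℕ) : Set (ℤ × ℤ) :=
  (skeleton d)^[k] P

def IsMinSnd (L : Set (ℤ × ℤ)) (y : ℤ) : Prop := (∃ p ∈ L, p.2 = y) ∧ ∀ p ∈ L, y ≤ p.2
def IsMaxSnd (L : Set (ℤ × ℤ)) (y : ℤ) : Prop := (∃ p ∈ L, p.2 = y) ∧ ∀ p ∈ L, p.2 ≤ y
def IsMinFst (L : Set (ℤ × ℤ)) (x : ℤ) : Prop := (∃ p ∈ L, p.1 = x) ∧ ∀ p ∈ L, x ≤ p.1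
def IsMaxFst (L : Set (ℤ × ℤ)) (x : ℤ) : Prop := (∃ p ∈ L, p.1 = x) ∧ ∀ p ∈ L, p.1 ≤ x

/-- The set of exit coordinates (specified by `spec`) of the shadow lines of the `i`-th
iterated skeleton of `P` in direction `d`. -/
def exitSet (spec : Set (ℤ × ℤ) → ℤ → Prop) (d : ℤ × ℤ → ℤ × ℤ → Prop)
    (P : Set (ℤ × ℤ)) (i : ℕ) : Set ℤ :=
  {v | ∃ j : ℕ, spec (shadowLine d (skeletonIter d P i) (j + 1)) v}

/-- The word read off along one edge in Viennot's construction is the lattice word of the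
standard tableau `T`: there is an enumeration `e` of all shadow-line exit coordinates,
in the order prescribed by `lt`, such that the `m`-th exit belongs to a shadow line of the
`i`-th iterated skeleton exactly when the entry `m` of `T` lies in row `i + 1`. -/
def ReadsWord (spec : Set (ℤ × ℤ) → ℤ → Prop) (lt : ℤ → ℤ → Prop)
    (d : ℤ × ℤ → ℤ × ℤ → Prop) (P : Set (ℤ × ℤ)) (T : List (List ℕ)) : Prop :=
  ∃ e : Fin T.flatten.length → ℤ,
    (∀ a b : Fin T.flatten.length, a < b → lt (e a) (e b)) ∧
    (Set.range e = ⋃ i : ℕ, exitSet spec d P i) ∧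
    ∀ (m : Fin T.flatten.length) (i : ℕ), e m ∈ exitSet spec d P i →
      (T.findIdx fun row => row.contains (m.1 + 1)) + 1 = i + 1

/-- `𝒱(𝒫, ↗) = (Pt, Qt)`: the P-word is read bottom-to-top along the right edge
(east exit heights, which are the minimal `y`-coordinates of the lines), the Q-word
left-to-right along the top edge (north exits at minimal `x`-coordinates). -/
def ViennotNE (P : Set (ℤ × ℤ)) (Pt Qt : List (List ℕ)) : Prop :=
  ReadsWord IsMinSnd (· < ·) dirNE P Pt ∧ ReadsWord IsMinFst (· < ·) dirNE P Qt

/-- `𝒱(𝒫, ↘) = (Pt, Qt)`: P-word left-to-right along the bottom edge, Q-word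
top-to-bottom along the right edge. -/
def ViennotSE (P : Set (ℤ × ℤ)) (Pt Qt : List (List ℕ)) : Prop :=
  ReadsWord IsMinFst (· < ·) dirSE P Pt ∧ ReadsWord IsMaxSnd (· > ·) dirSE P Qt

/-- `𝒱(𝒫, ↙) = (Pt, Qt)`: P-word bottom-to-top along the left edge, Q-word
right-to-left along the bottom edge. -/
def ViennotSW (P : Set (ℤ × ℤ)) (Pt Qt : List (List ℕ)) : Prop :=
  ReadsWord IsMaxSnd (· < ·) dirSW P Pt ∧ ReadsWord IsMaxFst (· > ·) dirSW P Qt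

/-- `𝒱(𝒫, ↖) = (Pt, Qt)`: P-word right-to-left along the top edge, Q-word
bottom-to-top along the left edge. -/
def ViennotNW (P : Set (ℤ × ℤ)) (Pt Qt : List (List ℕ)) : Prop :=
  ReadsWord IsMaxFst (· > ·) dirNW P Pt ∧ ReadsWord IsMinSnd (· < ·) dirNW P Qt

/-- The point set `𝒫^NE(ρ)` of the northeast `n × n` block of the permutation matrix of
`ρ ∈ S_{2n}`, in Cartesian coordinates. -/
def pointsNE (n : ℕ) (f : ℕ → ℕ) : Set (ℤ × ℤ) :=
  {p | ∃ x : ℕ, 1 ≤ x ∧ x ≤ n ∧ n < f x ∧ p = ((f x : ℤ) - n, (n : ℤ) + 1 - x)}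

/-! ## Crossings and nestings of perfect matchings -/

/-- The matching `{a, f a}` on `{1, …, N}` has a `k`-crossing:
blocks `{a₁ < b₁}, …, {a_k < b_k}` with `a₁ < ⋯ < a_k < b₁ < ⋯ < b_k`. -/
def HasCrossing (f : ℕ → ℕ) (N k : ℕ) : Prop :=
  ∃ a b : Fin k → ℕ, StrictMono a ∧ StrictMono b ∧
    (∀ m, 1 ≤ a m ∧ b m ≤ N ∧ f (a m) = b m ∧ a m < b m) ∧
    ∀ m m' : Fin k, a m < b m'

/-- The matching `{a, f a}` on `{1, …, N}` has a `k`-nesting: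
blocks `{a₁ < b₁}, …, {a_k < b_k}` with `a₁ < ⋯ < a_k < b_k < ⋯ < b₁`. -/
def HasNesting (f : ℕ → ℕ) (N k : ℕ) : Prop :=
  ∃ a b : Fin k → ℕ, StrictMono a ∧ StrictAnti b ∧
    (∀ m, 1 ≤ a m ∧ b m ≤ N ∧ f (a m) = b m ∧ a m < b m) ∧
    ∀ m m' : Fin k, a m < b m'

/-! ## Local rules, the promotion–evacuation diagram, and the promotion matrix -/

/-- Partitions are encoded as lists of row lengths (fixed length, padded by zeros). -/
def sortDesc (l : List ℕ) : List ℕ := List.insertionSort (· ≥ ·) l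

/-- The sequence `ν + κ - λ` (pointwise). -/
def ruleSeq (lam nu ka : List ℕ) : List ℕ :=
  List.zipWith (fun a b => a - b) (List.zipWith (· + ·) nu ka) lam

/-- The local rule: `μ = sort(ν + κ - λ)`. -/
def localRule (lam nu ka : List ℕ) : List ℕ := sortDesc (ruleSeq lam nu ka)

/-- The decoration of a local rule square: `i` if `ν + κ - λ` fails to be sorted at rows
`i, i+1` (1-indexed), and `0` if no decoration is present. -/
def decoration (lam nu ka : List ℕ) : ℕ :=
  match (List.range (ruleSeq lam nu ka).length).find? (fun i =>
      decide ((ruleSeq lam nu ka).getD i 0 < (ruleSeq lam nu ka).getD (i + 1) 0)) with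
  | some i => i + 1
  | none => 0

/-- Fill in the next row of the promotion–evacuation diagram from the previous row `prev`:
the new row starts with the empty partition at position `s` and continues by local rules. -/
def nextRow (R : ℕ) (prev : ℕ → List ℕ) (s : ℕ) : ℕ → List ℕ
  | 0 => List.replicate R 0
  | x + 1 =>
    if x + 1 ≤ s then List.replicate R 0
    else localRule (prev x) (prev (x + 1)) (nextRow R prev s x)

/-- The `j`-th row of the promotion–evacuation diagram of `T ∈ SYT(R × C)`, as a function
of the column index (row `0` is the chain of `T`). -/
def PErow (R C : ℕ) (T : ℕ → ℕ → ℕ) : ℕ → ℕ → List ℕ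
  | 0 => fun x => (List.range R).map fun i =>
      ((Finset.range C).filter fun j => T i j ≤ min x (R * C)).card
  | j + 1 => nextRow R (PErow R C T j) (j + 1)

/-- For `S = stack(P, Q) ∈ SYT(2r × c)` and `n = r*c`, the `(n+1) × (n+1)` northeast block
of partitions `λ(x, y)` of `PEdiagram(S)` (Cartesian coordinates): `λ(x,y)` is the
diagram entry in row `n - y`, column `n + x`. -/
def lamBlock (r c : ℕ) (S : ℕ → ℕ → ℕ) (x y : ℕ) : List ℕ :=
  PErow (2 * r) c S (r * c - y) (r * c + x)

/-- The entry of `PM(S)^NE` at Cartesian coordinates `(x, y)`, `1 ≤ x, y ≤ n`: the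
decoration of the local rule square with corners `λ(x-1, y-1)`, `λ(x-1, y)`, `λ(x, y-1)`,
`λ(x, y)`. -/
def PMNE (r c : ℕ) (S : ℕ → ℕ → ℕ) (x y : ℕ) : ℕ :=
  decoration (lamBlock r c S (x - 1) y) (lamBlock r c S x y) (lamBlock r c S (x - 1) (y - 1))

/-- Chain of partitions of a list tableau: shape of the entries `≤ m`. -/
def chainOfL (T : List (List ℕ)) (m : ℕ) : List ℕ :=
  T.map fun row => (row.filter fun a => decide (a ≤ m)).length

/-- Column height `#{i : j < l i}` of a partition. -/
def colHeight (l : List ℕ) (j : ℕ) : ℕ := (l.filter fun a => decide (j < a)).length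

/-- Vertical sum `l +' m` of two partitions (stack the columns of `m` onto those of `l`),
computed inside a `rows × cols` bounding box. -/
def vsum (rows cols : ℕ) (l m : List ℕ) : List ℕ :=
  (List.range rows).map fun i =>
    ((List.range cols).filter fun j => decide (i < colHeight l j + colHeight m j)).length

/-! ## The point sets `S_k` and `S_{kj}` -/

/-- `x_{sj}`: the entry of `Q` in row `s`, column `j` (1-indexed). -/
def xEnt (Q : ℕ → ℕ → ℕ) (s j : ℕ) : ℤ := (Q (s - 1) (j - 1) : ℤ)

/-- `y_{tj}`: the entry of `∂(P)` in row `t`, column `j` (1-indexed). -/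
def yEnt (r c : ℕ) (P : ℕ → ℕ → ℕ) (t j : ℕ) : ℤ :=
  (entryL (evacL (toListT r c P)) (t - 1) (j - 1) : ℤ)

def Skj (r c : ℕ) (P Q : ℕ → ℕ → ℕ) (k j : ℕ) : Set (ℤ × ℤ) :=
  {p | ∃ s t : ℕ, 1 ≤ s ∧ s ≤ r ∧ 1 ≤ t ∧ t ≤ r ∧ s + t - 1 = k ∧
    p = (xEnt Q s j, yEnt r c P t j)}

def Sk (r c : ℕ) (P Q : ℕ → ℕ → ℕ) (k : ℕ) : Set (ℤ × ℤ) :=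
  ⋃ j ∈ Set.Icc 1 c, Skj r c P Q k j

/-- A southeast chain of `k` ones in the matrix `U` (rows increase, columns increase),
contained in a rectangle that fully fits into the strictly upper triangular part of the
`N × N` matrix. -/
def HasSEChain (U : ℕ → ℕ → ℕ) (N k : ℕ) : Prop :=
  ∃ a b : Fin k → ℕ, StrictMono a ∧ StrictMono b ∧ (∀ m, U (a m) (b m) = 1) ∧
    ∃ r₁ r₂ c₁ c₂ : ℕ, 1 ≤ r₁ ∧ r₂ < c₁ ∧ c₂ ≤ N ∧
      ∀ m, r₁ ≤ a m ∧ a m ≤ r₂ ∧ c₁ ≤ b m ∧ b m ≤ c₂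

/-- A southwest chain of `k` ones in the matrix `U` (rows increase, columns decrease),
contained in a rectangle that fully fits into the strictly upper triangular part of the
`N × N` matrix. -/
def HasSWChain (U : ℕ → ℕ → ℕ) (N k : ℕ) : Prop :=
  ∃ a b : Fin k → ℕ, StrictMono a ∧ StrictAnti b ∧ (∀ m, U (a m) (b m) = 1) ∧
    ∃ r₁ r₂ c₁ c₂ : ℕ, 1 ≤ r₁ ∧ r₂ < c₁ ∧ c₂ ≤ N ∧
      ∀ m, r₁ ≤ a m ∧ a m ≤ r₂ ∧ c₁ ≤ b m ∧ b m ≤ c₂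

/-!
Write `n = r * c` and `S = stack r c P Q`. Throughout the first `n` gromotions of `S`, column `j`
consists, from the top, of `h j` entries of `P`, column `j` of `Q` (shifted by `n`), and entries
created by gromotion. Each slide path leaves the entries of `P` at the bottom of some column `j₀`
and then runs down all of column `j₀` of `Q`; so the step lowers `h j₀` by one, and the entry
sliding into row `m` is `n + Q (m - h j₀) j₀` if `h j₀ ≤ m` and at most `n` otherwise. Hence
`𝒫^NE(prom_m S)` is the set of points `(Q s j, B t j)` with `s + t + 1 = m`, where `n - B t j` is
the step at which column `j` drops to height `t`. Both `Q` and `B` increase strictly along rows and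
columns. For such arrays the southwest shadow lines of that set are its columns, from right to
left, and the skeleton of the staircase in column `j` is the staircase for `m - 1`.
-/

/-! ## Southwest skeleta of staircases and bands -/

theorem lineSkeleton_dirSW_image {a b : ℕ → ℤ} {n : ℕ} (ha : StrictMonoOn a (Set.Iic n))
    (hb : StrictAntiOn b (Set.Iic n)) :
    lineSkeleton dirSW ((fun s => (a s, b s)) '' Set.Iic n) =
      (fun s => (a s, b (s + 1))) '' Set.Iio n := by
  have hshadow : ∀ x : ℤ × ℤ,
      (∃ p ∈ (fun s => (a s, b s)) '' Set.Iic n, ∃ q ∈ (fun s => (a s, b s)) '' Set.Iic n,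
        p ≠ q ∧ dirSW p x ∧ dirSW q x) ↔ ∃ u v, u < v ∧ v ≤ n ∧ x.1 ≤ a u ∧ x.2 ≤ b v := by
    intro x
    constructor
    · rintro ⟨_, ⟨u, hu, rfl⟩, _, ⟨v, hv, rfl⟩, hne, ⟨hxu, hyu⟩, ⟨hxv, hyv⟩⟩
      rcases lt_or_gt_of_ne (fun h : u = v => hne (h ▸ rfl)) with huv | hvu
      · exact ⟨u, v, huv, hv, hxu, hyv⟩
      · exact ⟨v, u, hvu, hu, hxv, hyu⟩
    · rintro ⟨u, v, huv, hv, hxu, hyv⟩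
      have hu : u ∈ Set.Iic n := Set.mem_Iic.2 (huv.le.trans hv)
      refine ⟨_, ⟨u, hu, rfl⟩, _, ⟨v, hv, rfl⟩, fun h => (ha hu hv huv).ne (congrArg Prod.fst h),
        ⟨hxu, hyv.trans (hb hu hv huv).le⟩, ⟨hxu.trans (ha hu hv huv).le, hyv⟩⟩
  ext x
  simp only [lineSkeleton, minimalsUnder, Set.mem_ofPred_eq, hshadow]
  constructor
  · rintro ⟨⟨u, v, huv, hv, hxu, hyv⟩, hmax⟩
    have hu1 : u + 1 ∈ Set.Iic n := Set.mem_Iic.2 (by omega)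
    have hle : b v ≤ b (u + 1) := (hb.le_iff_ge hv hu1).2 huv
    exact ⟨u, Set.mem_Iio.2 (by omega),
      hmax (a u, b (u + 1)) ⟨u, u + 1, by omega, hu1, le_rfl, le_rfl⟩ ⟨hxu, hyv.trans hle⟩⟩
  · rintro ⟨s, hs, rfl⟩
    refine ⟨⟨s, s + 1, by omega, hs, le_rfl, le_rfl⟩, ?_⟩
    rintro y ⟨u, v, huv, hv, hyu, hyv⟩ ⟨hsy, hs1y⟩
    have hs' : s + 1 ∈ Set.Iic n := Set.mem_Iic.2 (Set.mem_Iio.1 hs)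
    have hsu : s ≤ u := (ha.le_iff_le (Set.mem_Iic.2 (Set.mem_Iio.1 hs).le)
      (Set.mem_Iic.2 (huv.le.trans hv))).1 (hsy.trans hyu)
    have hvs : v ≤ s + 1 := (hb.le_iff_ge hs' (Set.mem_Iic.2 hv)).1 (hs1y.trans hyv)
    obtain rfl : u = s := by omega
    obtain rfl : v = u + 1 := by omega
    exact Prod.ext (le_antisymm hyu hsy) (le_antisymm hyv hs1y)

structure GridStrictMono (r c : ℕ) (A : ℕ → ℕ → ℕ) : Prop where
  row : ∀ s j j', s < r → j < j' → j' < c → A s j < A s j'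
  col : ∀ s s' j, s < s' → s' < r → j < c → A s j < A s' j

def columnPoints (A B : ℕ → ℕ → ℕ) (m j : ℕ) : Set (ℤ × ℤ) :=
  {p | ∃ s t, s + t + 1 = m ∧ p = ((A s j : ℤ), (B t j : ℤ))}

def bandPoints (A B : ℕ → ℕ → ℕ) (m J : ℕ) : Set (ℤ × ℤ) :=
  {p | ∃ j < J, p ∈ columnPoints A B m j}

namespace GridStrictMono

variable {r c : ℕ} {A : ℕ → ℕ → ℕ}

theorem row_le (hA : GridStrictMono r c A) {s j j' : ℕ} (hs : s < r) (hj : j ≤ j')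
    (hj' : j' < c) : A s j ≤ A s j' :=
  hj.eq_or_lt.elim (fun h => h ▸ le_rfl) fun h => (hA.row s j j' hs h hj').le

theorem col_le (hA : GridStrictMono r c A) {s s' j : ℕ} (hs : s ≤ s') (hs' : s' < r)
    (hj : j < c) : A s j ≤ A s' j :=
  hs.eq_or_lt.elim (fun h => h ▸ le_rfl) fun h => (hA.col s s' j h hs' hj).le

theorem le_of_apply_le (hA : GridStrictMono r c A) {s s' j j' : ℕ} (hs : s < r) (hs' : s' < r)
    (hj : j' ≤ j) (hjc : j < c) (h : A s j ≤ A s' j') : s ≤ s' := by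
  by_contra! hlt
  have := (hA.row_le hs' hj hjc).trans_lt (hA.col s' s j hlt hs hjc)
  omega

end GridStrictMono

section BandPoints

variable {r c m : ℕ} {A B : ℕ → ℕ → ℕ}

theorem columnPoints_eq_image (hm : 1 ≤ m) (j : ℕ) :
    columnPoints A B m j =
      (fun s => ((A s j : ℤ), (B (m - 1 - s) j : ℤ))) '' Set.Iic (m - 1) := by
  ext p
  constructor
  · rintro ⟨s, t, hst, rfl⟩
    exact ⟨s, Set.mem_Iic.2 (by omega), by simp only [show m - 1 - s = t by omega]⟩
  · rintro ⟨s, hs, rfl⟩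
    exact ⟨s, m - 1 - s, by have := Set.mem_Iic.1 hs; omega, rfl⟩

theorem lineSkeleton_columnPoints (hA : GridStrictMono r c A) (hB : GridStrictMono r c B)
    (hm : 2 ≤ m) (hmr : m ≤ r) {j : ℕ} (hj : j < c) :
    lineSkeleton dirSW (columnPoints A B m j) = columnPoints A B (m - 1) j := by
  have ha : StrictMonoOn (fun s => (A s j : ℤ)) (Set.Iic (m - 1)) := fun s _ s' hs' hss' => by
    have := hA.col s s' j hss' (by have := Set.mem_Iic.1 hs'; omega) hj
    simp only
    exact_mod_cast this
  have hb : StrictAntiOn (fun s => (B (m - 1 - s) j : ℤ)) (Set.Iic (m - 1)) :=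
    fun s hs s' hs' hss' => by
      simp only [Set.mem_Iic] at hs hs'
      have := hB.col (m - 1 - s') (m - 1 - s) j (by omega) (by omega) hj
      simp only
      exact_mod_cast this
  rw [columnPoints_eq_image (by omega), lineSkeleton_dirSW_image ha hb,
    columnPoints_eq_image (by omega)]
  ext p
  simp only [Set.mem_image, Set.mem_Iio, Set.mem_Iic]
  refine exists_congr fun s => and_congr (by omega) ?_
  rw [show m - 1 - (s + 1) = m - 1 - 1 - s by omega]

theorem eq_of_mem_columnPoints_of_dirSW (hA : GridStrictMono r c A) (hB : GridStrictMono r c B)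
    (hmr : m ≤ r) {J j : ℕ} (hJ : J < c) (hj : j ≤ J) {p q : ℤ × ℤ}
    (hp : p ∈ columnPoints A B m J) (hq : q ∈ columnPoints A B m j) (hpq : dirSW q p) :
    q = p ∧ j = J := by
  obtain ⟨s, t, hst, rfl⟩ := hp
  obtain ⟨s', t', hst', rfl⟩ := hq
  obtain ⟨h1, h2⟩ : A s J ≤ A s' j ∧ B t J ≤ B t' j := by
    simpa only [dirSW, Nat.cast_le] using hpq
  have hs := hA.le_of_apply_le (by omega) (by omega) hj hJ h1
  have ht := hB.le_of_apply_le (by omega) (by omega) hj hJ h2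
  obtain rfl : s' = s := by omega
  obtain rfl : t' = t := by omega
  obtain rfl : j = J := by
    by_contra hne
    have := hA.row s' j J (by omega) (by omega) hJ
    omega
  exact ⟨rfl, rfl⟩

theorem minimalsUnder_bandPoints (hA : GridStrictMono r c A) (hB : GridStrictMono r c B)
    (hmr : m ≤ r) {J : ℕ} (hJ : J < c) :
    minimalsUnder dirSW (bandPoints A B m (J + 1)) = columnPoints A B m J := by
  ext p
  constructor
  · rintro ⟨⟨j, hj, s, t, hst, rfl⟩, hmin⟩
    have hq : ((A s J : ℤ), (B t J : ℤ)) ∈ bandPoints A B m (J + 1) :=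
      ⟨J, by omega, s, t, hst, rfl⟩
    obtain ⟨h1, h2⟩ : A s j ≤ A s J ∧ B t j ≤ B t J :=
      ⟨hA.row_le (by omega) (by omega) hJ, hB.row_le (by omega) (by omega) hJ⟩
    have := hmin _ hq ⟨by simpa using h1, by simpa using h2⟩
    exact this ▸ ⟨s, t, hst, rfl⟩
  · intro hp
    refine ⟨⟨J, by omega, hp⟩, ?_⟩
    rintro q ⟨j, hj, hq⟩ hqp
    exact (eq_of_mem_columnPoints_of_dirSW hA hB hmr hJ (by omega) hp hq hqp).1

theorem bandPoints_diff_columnPoints (hA : GridStrictMono r c A) (hB : GridStrictMono r c B)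
    (hmr : m ≤ r) {J : ℕ} (hJ : J < c) :
    bandPoints A B m (J + 1) \ columnPoints A B m J = bandPoints A B m J := by
  ext p
  constructor
  · rintro ⟨⟨j, hj, hp⟩, hnot⟩
    refine ⟨j, ?_, hp⟩
    rcases (Nat.lt_succ_iff.1 hj).eq_or_lt with rfl | h
    · exact absurd hp hnot
    · exact h
  · rintro ⟨j, hj, hp⟩
    refine ⟨⟨j, by omega, hp⟩, fun hpJ => ?_⟩
    have := (eq_of_mem_columnPoints_of_dirSW hA hB hmr hJ hj.le hpJ hp ⟨le_rfl, le_rfl⟩).2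
    omega

theorem shadowLine_bandPoints (hA : GridStrictMono r c A) (hB : GridStrictMono r c B)
    (hmr : m ≤ r) (K : ℕ) :
    shadowLine dirSW (bandPoints A B m c) (K + 1) =
      if K < c then columnPoints A B m (c - 1 - K) else ∅ := by
  have hrest : ∀ K, shadowRest dirSW (bandPoints A B m c) K = bandPoints A B m (c - K) := by
    intro K
    induction K with
    | zero => rfl
    | succ K ih =>
      rw [shadowRest, ih]
      rcases Nat.lt_or_ge K c with hK | hK
      · obtain ⟨J, hJ⟩ : ∃ J, c - K = J + 1 := ⟨c - K - 1, by omega⟩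
        rw [hJ, minimalsUnder_bandPoints hA hB hmr (by omega),
          bandPoints_diff_columnPoints hA hB hmr (by omega), show c - (K + 1) = J by omega]
      · rw [show c - K = 0 by omega, show c - (K + 1) = 0 by omega]
        ext p
        simp [bandPoints]
  rw [shadowLine, Nat.add_sub_cancel, hrest]
  split_ifs with hK
  · rw [show c - K = c - 1 - K + 1 by omega, minimalsUnder_bandPoints hA hB hmr (by omega)]
  · ext p
    simp [minimalsUnder, bandPoints, show c - K = 0 by omega]

theorem skeleton_bandPoints (hA : GridStrictMono r c A) (hB : GridStrictMono r c B)
    (hm : 2 ≤ m) (hmr : m ≤ r) :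
    skeleton dirSW (bandPoints A B m c) = bandPoints A B (m - 1) c := by
  ext p
  simp only [skeleton, Set.mem_iUnion, shadowLine_bandPoints hA hB hmr]
  constructor
  · rintro ⟨K, hp⟩
    split_ifs at hp with hK
    · rw [lineSkeleton_columnPoints hA hB hm hmr (by omega)] at hp
      exact ⟨c - 1 - K, by omega, hp⟩
    · simp [lineSkeleton, minimalsUnder] at hp
  · rintro ⟨j, hj, hp⟩
    refine ⟨c - 1 - j, ?_⟩
    rw [if_pos (by omega), show c - 1 - (c - 1 - j) = j by omega,
      lineSkeleton_columnPoints hA hB hm hmr hj]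
    exact hp

end BandPoints

theorem skeletonIter_succ (d : ℤ × ℤ → ℤ × ℤ → Prop) (P : Set (ℤ × ℤ)) (k : ℕ) :
    skeletonIter d P (k + 1) = skeleton d (skeletonIter d P k) :=
  Function.iterate_succ_apply' _ _ _

/-! ## Slide paths and gromotion -/

theorem find?_range_eq_some {p : ℕ → Bool} {N k : ℕ} (hk : k < N) (hp : p k = true)
    (hmin : ∀ j < k, p j = false) : (List.range N).find? p = some k := by
  rw [List.find?_eq_some_iff_getElem]
  exact ⟨hp, k, by simpa using hk, by simp, fun j hj => by simp [hmin j hj]⟩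

section SlidePath

variable {R C : ℕ} {T : ℕ → ℕ → ℕ}

theorem ext_of_lt {i j : ℕ} (hi : i < R) (hj : j < C) : ext R C T (i, j) = (T i j : WithTop ℕ) :=
  if_pos ⟨hi, hj⟩

theorem ext_of_not_lt {i j : ℕ} (h : ¬(i < R ∧ j < C)) : ext R C T (i, j) = ⊤ :=
  if_neg h

variable (R C T) in
theorem nextCell_eq_or (i j : ℕ) :
    nextCell R C T (i, j) = (i, j + 1) ∨ nextCell R C T (i, j) = (i + 1, j) := by
  unfold nextCell
  split_ifs <;> simp

theorem nextCell_eq_south {i j : ℕ} (hi : i + 1 < R) (hle : j + 1 < C → T (i + 1) j ≤ T i (j + 1)) :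
    nextCell R C T (i, j) = (i + 1, j) := by
  refine if_neg ?_
  by_cases hj : j + 1 < C
  · rw [ext_of_lt (by omega) hj, ext_of_lt hi (by omega), not_lt]
    exact_mod_cast hle hj
  · rw [ext_of_not_lt (by omega)]
    exact not_top_lt

theorem nextCell_eq_east {i j : ℕ} (hj : j + 1 < C) (hlt : i + 1 < R → T i (j + 1) < T (i + 1) j)
    (hi : i < R) : nextCell R C T (i, j) = (i, j + 1) := by
  refine if_pos ?_
  rw [ext_of_lt hi hj]
  by_cases hi' : i + 1 < R
  · rw [ext_of_lt hi' (by omega)]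
    exact_mod_cast hlt hi'
  · rw [ext_of_not_lt (by omega)]
    exact WithTop.coe_lt_top _

theorem nextCell_mem_grid {i j : ℕ} (hi : i < R) (hj : j < C) (hcorner : ¬(i = R - 1 ∧ j = C - 1)) :
    (nextCell R C T (i, j)).1 < R ∧ (nextCell R C T (i, j)).2 < C := by
  by_cases hj' : j + 1 < C
  · by_cases hi' : i + 1 < R
    · rcases nextCell_eq_or R C T i j with h | h <;> rw [h] <;>
        exact ⟨by omega, by omega⟩
    · rw [nextCell_eq_east hj' (fun h => absurd h hi') hi]
      exact ⟨hi, hj'⟩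
  · rw [nextCell_eq_south (by omega) (fun h => absurd h hj')]
    exact ⟨by omega, hj⟩

theorem slidePath_succ (k : ℕ) : slidePath R C T (k + 1) = nextCell R C T (slidePath R C T k) :=
  rfl

variable (R C T) in
theorem slidePath_fst_add_snd (k : ℕ) : (slidePath R C T k).1 + (slidePath R C T k).2 = k := by
  induction k with
  | zero => rfl
  | succ k ih =>
    rcases hp : slidePath R C T k with ⟨i, j⟩
    rw [hp] at ih
    rcases nextCell_eq_or R C T i j with h | h <;>
      rw [slidePath_succ, hp, h] <;> dsimp only at ih ⊢ <;> omega

variable (R C T) in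
theorem slidePath_fst_succ (k : ℕ) :
    (slidePath R C T k).1 ≤ (slidePath R C T (k + 1)).1 ∧
      (slidePath R C T (k + 1)).1 ≤ (slidePath R C T k).1 + 1 := by
  rcases hp : slidePath R C T k with ⟨i, j⟩
  rcases nextCell_eq_or R C T i j with h | h <;>
    rw [slidePath_succ, hp, h] <;> dsimp only <;> omega

variable (R C T) in
theorem monotone_slidePath_fst : Monotone fun k => (slidePath R C T k).1 :=
  monotone_nat_of_le_succ fun k => (slidePath_fst_succ R C T k).1

theorem exists_first_slidePath_fst_eq {m k : ℕ} (hk : m ≤ (slidePath R C T k).1) :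
    ∃ k' ≤ k, (slidePath R C T k').1 = m ∧ ∀ k'' < k', (slidePath R C T k'').1 < m := by
  classical
  have hex : ∃ k, m ≤ (slidePath R C T k).1 := ⟨k, hk⟩
  refine ⟨Nat.find hex, Nat.find_min' hex hk, ?_, fun k'' hk'' => not_le.1 (Nat.find_min hex hk'')⟩
  have hspec := Nat.find_spec hex
  rcases Nat.eq_zero_or_pos (Nat.find hex) with h0 | hpos
  · rw [h0] at hspec ⊢
    exact le_antisymm (Nat.zero_le m) hspec
  · have hprev := Nat.find_min hex (Nat.sub_one_lt_of_lt hpos)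
    have hstep := (slidePath_fst_succ R C T (Nat.find hex - 1)).2
    rw [Nat.sub_add_cancel hpos] at hstep
    omega

theorem slideInto_eq {m k : ℕ} (hk : k < R + C - 1) (hrow : (slidePath R C T k).1 = m)
    (hfirst : ∀ k' < k, (slidePath R C T k').1 < m) :
    slideInto R C T m = T m (slidePath R C T k).2 := by
  rw [slideInto, find?_range_eq_some hk (by simp [hrow])
    (fun k' hk' => by simp [(hfirst k' hk').ne])]
  dsimp only
  rw [hrow]

theorem gromotion_corner : gromotion R C T (R - 1) (C - 1) = maxEntry R C T + 1 :=
  if_pos ⟨rfl, rfl⟩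

theorem gromotion_of_slidePath_eq {i j : ℕ} (hcorner : ¬(i = R - 1 ∧ j = C - 1))
    (hij : i + j < R + C - 2) (hpath : slidePath R C T (i + j) = (i, j)) :
    gromotion R C T i j = T (slidePath R C T (i + j + 1)).1 (slidePath R C T (i + j + 1)).2 := by
  unfold gromotion
  rw [if_neg hcorner, find?_range_eq_some hij (by simp [hpath])]
  intro k hk
  have := slidePath_fst_add_snd R C T k
  simp only [decide_eq_false_iff_not]
  intro hk'
  rw [hk'] at this
  omega

theorem gromotion_of_slidePath_ne {i j : ℕ} (hcorner : ¬(i = R - 1 ∧ j = C - 1))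
    (hpath : slidePath R C T (i + j) ≠ (i, j)) : gromotion R C T i j = T i j := by
  unfold gromotion
  rw [if_neg hcorner, List.find?_eq_none.2]
  intro k _
  have := slidePath_fst_add_snd R C T k
  simp only [decide_eq_true_eq]
  intro hk
  rw [hk] at this
  subst this
  exact hpath hk

theorem le_maxEntry {i j : ℕ} (hi : i < R) (hj : j < C) : T i j ≤ maxEntry R C T :=
  Finset.le_sup (f := fun p : ℕ × ℕ => T p.1 p.2) (b := (i, j))
    (Finset.mem_product.2 ⟨Finset.mem_range.2 hi, Finset.mem_range.2 hj⟩)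

theorem maxEntry_le {v : ℕ} (h : ∀ i j, i < R → j < C → T i j ≤ v) : maxEntry R C T ≤ v :=
  Finset.sup_le fun p hp => by
    simp only [Finset.mem_product, Finset.mem_range] at hp
    exact h p.1 p.2 hp.1 hp.2

end SlidePath

/-! ## The orbit of a stacked tableau -/

theorem IsSYT.gridStrictMono {r c : ℕ} {Q : ℕ → ℕ → ℕ} (hQ : IsSYT r c Q) :
    GridStrictMono r c Q where
  row s j j' hs hjj' hj' := by
    induction j', hjj' using Nat.le_induction with
    | base => exact hQ.1 s j hs hj'
    | succ j' _ ih => exact (ih (by omega)).trans (hQ.1 s j' hs hj')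
  col s s' j hss' hs' hj := by
    induction s', hss' using Nat.le_induction with
    | base => exact hQ.2.1 s j hs' hj
    | succ s' _ ih => exact (ih (by omega)).trans (hQ.2.1 s' j hs' hj)

theorem IsSYT.mem_Icc {r c : ℕ} {Q : ℕ → ℕ → ℕ} (hQ : IsSYT r c Q) {i j : ℕ} (hi : i < r)
    (hj : j < c) : Q i j ∈ Set.Icc 1 (r * c) :=
  hQ.2.2.mapsTo (show (i, j) ∈ {p : ℕ × ℕ | p.1 < r ∧ p.2 < c} from ⟨hi, hj⟩)

/-- The shape of `U = gromotion^[x] (stack r c P Q)`: column `j` holds, from the top, `h j`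
entries left over from `P`, then column `j` of `Q` shifted by `r * c`, then the `r - h j`
entries created by the `x` gromotions so far. -/
structure StackInv (r c x : ℕ) (Q U : ℕ → ℕ → ℕ) (h : ℕ → ℕ) : Prop where
  height_succ_le : ∀ j, j + 1 < c → h (j + 1) ≤ h j
  height_le : ∀ j, j < c → h j ≤ r
  sum_sub_height : ∑ j ∈ Finset.range c, (r - h j) = x
  small : ∀ i j, j < c → i < h j → U i j ≤ r * c
  shifted : ∀ i j, j < c → h j ≤ i → i < r + h j → U i j = r * c + Q (i - h j) j
  fresh : ∀ i j, j < c → r + h j ≤ i → i < 2 * r →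
    2 * (r * c) < U i j ∧ U i j ≤ 2 * (r * c) + x
  maxEntry_eq : maxEntry (2 * r) c U = 2 * (r * c) + x

def smallRegion (c : ℕ) (h : ℕ → ℕ) : Set (ℕ × ℕ) := {p | p.2 < c ∧ p.1 < h p.2}

def freshRegion (r c : ℕ) (h : ℕ → ℕ) : Set (ℕ × ℕ) :=
  {p | p.2 < c ∧ r + h p.2 ≤ p.1 ∧ p.1 < 2 * r}

@[simp] theorem mk_mem_smallRegion {c : ℕ} {h : ℕ → ℕ} {i j : ℕ} :
    (i, j) ∈ smallRegion c h ↔ j < c ∧ i < h j := Iff.rfl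

@[simp] theorem mk_mem_freshRegion {r c : ℕ} {h : ℕ → ℕ} {i j : ℕ} :
    (i, j) ∈ freshRegion r c h ↔ j < c ∧ r + h j ≤ i ∧ i < 2 * r := Iff.rfl

namespace StackInv

variable {r c x : ℕ} {Q U : ℕ → ℕ → ℕ} {h : ℕ → ℕ}

theorem height_antitone (H : StackInv r c x Q U h) {j j' : ℕ} (hjj' : j ≤ j') (hj' : j' < c) :
    h j' ≤ h j := by
  induction j', hjj' using Nat.le_induction with
  | base => exact le_rfl
  | succ j' _ ih => exact (H.height_succ_le j' hj').trans (ih (by omega))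

theorem mul_lt_of_height_le (hQ : IsSYT r c Q) (H : StackInv r c x Q U h) {i j : ℕ} (hj : j < c)
    (hi : h j ≤ i) (hi' : i < 2 * r) : r * c < U i j := by
  rcases Nat.lt_or_ge i (r + h j) with hlt | hge
  · rw [H.shifted i j hj hi hlt]
    have := (hQ.mem_Icc (show i - h j < r by omega) hj).1
    omega
  · have := (H.fresh i j hj hge hi').1
    omega

theorem le_of_mem_smallRegion (H : StackInv r c x Q U h) {p : ℕ × ℕ} (hp : p ∈ smallRegion c h) :
    U p.1 p.2 ≤ r * c :=
  H.small p.1 p.2 hp.1 hp.2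

theorem bounds_of_mem_freshRegion (H : StackInv r c x Q U h) {p : ℕ × ℕ}
    (hp : p ∈ freshRegion r c h) : 2 * (r * c) < U p.1 p.2 ∧ U p.1 p.2 ≤ 2 * (r * c) + x :=
  H.fresh p.1 p.2 hp.1 hp.2.1 hp.2.2

theorem lt_mul_of_height_pos (H : StackInv r c x Q U h) {j : ℕ} (hj : j < c) (hpos : 0 < h j) :
    x < r * c := by
  have hlt : ∑ j ∈ Finset.range c, (r - h j) < ∑ _j ∈ Finset.range c, r :=
    Finset.sum_lt_sum (fun _ _ => Nat.sub_le _ _)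
      ⟨j, Finset.mem_range.2 hj, by have := H.height_le j hj; omega⟩
  rwa [H.sum_sub_height, Finset.sum_const, Finset.card_range, smul_eq_mul, mul_comm] at hlt

theorem height_zero_pos (H : StackInv r c x Q U h) (hx : x < r * c) : 0 < h 0 := by
  by_contra! h0
  have hall : ∀ j ∈ Finset.range c, r - h j = r := fun j hj => by
    have := H.height_antitone (Nat.zero_le j) (Finset.mem_range.1 hj)
    omega
  rw [← H.sum_sub_height, Finset.sum_congr rfl hall, Finset.sum_const, Finset.card_range,
    smul_eq_mul, mul_comm] at hx
  exact lt_irrefl _ hx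

theorem height_eq_zero (H : StackInv r c (r * c) Q U h) {j : ℕ} (hj : j < c) : h j = 0 := by
  by_contra hne
  exact lt_irrefl _ (H.lt_mul_of_height_pos hj (Nat.pos_of_ne_zero hne))

theorem nextCell_mem_smallRegion (hQ : IsSYT r c Q) (H : StackInv r c x Q U h) {i j : ℕ}
    (hp : (i, j) ∈ smallRegion c h) (hi : i + 1 < h j) :
    nextCell (2 * r) c U (i, j) ∈ smallRegion c h := by
  obtain ⟨hj, -⟩ := hp
  have hhj := H.height_le j hj
  rcases nextCell_eq_or (2 * r) c U i j with heast | hsouth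
  · by_contra hnot
    rw [heast, mk_mem_smallRegion] at hnot
    have hsouth : nextCell (2 * r) c U (i, j) = (i + 1, j) :=
      nextCell_eq_south (by omega) fun hj' => by
        have := H.small (i + 1) j hj hi
        have := H.mul_lt_of_height_le hQ hj' (not_lt.1 fun h' => hnot ⟨hj', h'⟩)
          (show i < 2 * r by omega)
        omega
    rw [heast] at hsouth
    simp at hsouth
  · rw [hsouth]
    exact ⟨hj, hi⟩

theorem height_succ_le_of_exit (hQ : IsSYT r c Q) (H : StackInv r c x Q U h) {i j : ℕ}
    (hj : j < c) (hij : h j = i + 1) (hexit : nextCell (2 * r) c U (i, j) ∉ smallRegion c h)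
    (hj' : j + 1 < c) : h (j + 1) ≤ i := by
  by_contra! hlt
  have hhj := H.height_le j hj
  refine hexit ?_
  rw [nextCell_eq_east hj' (fun hi => ?_) (by omega)]
  · exact ⟨hj', hlt⟩
  · have := H.small i (j + 1) hj' hlt
    have := H.mul_lt_of_height_le hQ hj (show h j ≤ i + 1 by omega) hi
    omega

theorem nextCell_descent (hQ : IsSYT r c Q) (H : StackInv r c x Q U h) {i₀ j₀ d : ℕ}
    (hj₀ : j₀ < c) (hh : h j₀ = i₀ + 1) (heast : j₀ + 1 < c → h (j₀ + 1) ≤ i₀) (hd : d < r) :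
    nextCell (2 * r) c U (i₀ + d, j₀) = (i₀ + d + 1, j₀) := by
  have hhj := H.height_le j₀ hj₀
  have hQd := hQ.mem_Icc hd hj₀
  have hbelow : U (i₀ + d + 1) j₀ = r * c + Q d j₀ := by
    rw [H.shifted _ _ hj₀ (by omega) (by omega), show i₀ + d + 1 - h j₀ = d by omega]
  refine nextCell_eq_south (by omega) fun hj' => ?_
  have hh' := heast hj'
  rw [hbelow]
  rcases Nat.lt_or_ge (i₀ + d) (r + h (j₀ + 1)) with hlt | hge
  · rw [H.shifted _ _ hj' (by omega) hlt]
    have := hQ.gridStrictMono.row d j₀ (j₀ + 1) hd (by omega) hj'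
    have := hQ.gridStrictMono.col_le (show d ≤ i₀ + d - h (j₀ + 1) by omega) (by omega) hj'
    omega
  · have := (H.fresh _ _ hj' hge (by omega)).1
    simp only [Set.mem_Icc] at hQd
    omega

theorem nextCell_mem_freshRegion (H : StackInv r c x Q U h) {i j : ℕ}
    (hp : (i, j) ∈ freshRegion r c h) (hcorner : ¬(i = 2 * r - 1 ∧ j = c - 1)) :
    nextCell (2 * r) c U (i, j) ∈ freshRegion r c h := by
  obtain ⟨hj, hri, hi⟩ := mk_mem_freshRegion.1 hp
  have hgrid := nextCell_mem_grid (T := U) hi hj hcorner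
  rcases nextCell_eq_or (2 * r) c U i j with heast | hsouth
  · rw [heast] at hgrid ⊢
    exact ⟨hgrid.2, by have := H.height_succ_le j hgrid.2; dsimp only; omega, hi⟩
  · rw [hsouth] at hgrid ⊢
    exact ⟨hj, by dsimp only; omega, hgrid.1⟩

end StackInv

/-- The slide path of one gromotion step: it runs through entries left over from `P` up to
`(i₀, j₀)`, then straight down column `j₀` through the `r` entries of `Q`, and then through
fresh entries to the corner. -/
structure SlideShape (r c : ℕ) (U : ℕ → ℕ → ℕ) (h : ℕ → ℕ) (i₀ j₀ : ℕ) : Prop where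
  col_lt : j₀ < c
  height_eq : h j₀ = i₀ + 1
  height_succ_le : j₀ + 1 < c → h (j₀ + 1) ≤ i₀
  mem_smallRegion : ∀ k ≤ i₀ + j₀, slidePath (2 * r) c U k ∈ smallRegion c h
  descent : ∀ d ≤ r, slidePath (2 * r) c U (i₀ + j₀ + d) = (i₀ + d, j₀)
  mem_freshRegion : ∀ k, i₀ + j₀ + r < k → k ≤ 2 * r + c - 2 →
    slidePath (2 * r) c U k ∈ freshRegion r c h

namespace StackInv

variable {r c x : ℕ} {Q U : ℕ → ℕ → ℕ} {h : ℕ → ℕ}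

theorem exists_exit (hQ : IsSYT r c Q) (H : StackInv r c x Q U h) (hx : x < r * c) :
    ∃ i₀ j₀, j₀ < c ∧ h j₀ = i₀ + 1 ∧ (j₀ + 1 < c → h (j₀ + 1) ≤ i₀) ∧
      (∀ k ≤ i₀ + j₀, slidePath (2 * r) c U k ∈ smallRegion c h) ∧
      slidePath (2 * r) c U (i₀ + j₀) = (i₀, j₀) := by
  classical
  have hc : 0 < c := Nat.pos_of_mul_pos_left (Nat.zero_lt_of_lt hx)
  have hex : ∃ k, slidePath (2 * r) c U k ∉ smallRegion c h := by
    refine ⟨2 * r + c, fun ⟨hj, hi⟩ => ?_⟩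
    have := slidePath_fst_add_snd (2 * r) c U (2 * r + c)
    have := H.height_le _ hj
    omega
  have hnot := Nat.find_spec hex
  have hsmall : ∀ k < Nat.find hex, slidePath (2 * r) c U k ∈ smallRegion c h := fun k hk =>
    not_not.1 (Nat.find_min hex hk)
  generalize Nat.find hex = e at hnot hsmall
  have he : 0 < e := Nat.pos_of_ne_zero fun he =>
    hnot (he ▸ ⟨hc, H.height_zero_pos hx⟩)
  rcases hp : slidePath (2 * r) c U (e - 1) with ⟨i₀, j₀⟩
  have hsum : i₀ + j₀ = e - 1 := by
    simpa [hp] using slidePath_fst_add_snd (2 * r) c U (e - 1)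
  have hmem : (i₀, j₀) ∈ smallRegion c h := hp ▸ hsmall (e - 1) (by omega)
  obtain ⟨hj₀, hi₀⟩ := mk_mem_smallRegion.1 hmem
  have hexit : nextCell (2 * r) c U (i₀, j₀) ∉ smallRegion c h := by
    rwa [← hp, ← slidePath_succ, Nat.sub_add_cancel he]
  have hh : h j₀ = i₀ + 1 := by
    by_contra hne
    exact hexit (H.nextCell_mem_smallRegion hQ hmem (by omega))
  exact ⟨i₀, j₀, hj₀, hh, H.height_succ_le_of_exit hQ hj₀ hh hexit,
    fun k hk => hsmall k (by omega), hsum ▸ hp⟩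

theorem exists_slideShape (hQ : IsSYT r c Q) (H : StackInv r c x Q U h) (hx : x < r * c) :
    ∃ i₀ j₀, SlideShape r c U h i₀ j₀ := by
  obtain ⟨i₀, j₀, hj₀, hh, heast, hsmall, hstart⟩ := H.exists_exit hQ hx
  have hhj := H.height_le j₀ hj₀
  have hdescent : ∀ d ≤ r, slidePath (2 * r) c U (i₀ + j₀ + d) = (i₀ + d, j₀) := by
    intro d hd
    induction d with
    | zero => exact hstart
    | succ d ih =>
      rw [← add_assoc, slidePath_succ, ih (by omega),
        H.nextCell_descent hQ hj₀ hh heast (by omega)]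
      rfl
  have hfresh : ∀ d, i₀ + j₀ + r + d + 1 ≤ 2 * r + c - 2 →
      slidePath (2 * r) c U (i₀ + j₀ + r + d + 1) ∈ freshRegion r c h := by
    intro d hd
    induction d with
    | zero =>
      have hcorner : ¬(i₀ + r = 2 * r - 1 ∧ j₀ = c - 1) := by omega
      rw [slidePath_succ, hdescent r le_rfl]
      have hgrid := nextCell_mem_grid (T := U) (show i₀ + r < 2 * r by omega) hj₀ hcorner
      rcases nextCell_eq_or (2 * r) c U (i₀ + r) j₀ with heast' | hsouth
      · rw [heast'] at hgrid ⊢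
        exact ⟨hgrid.2, by have := heast hgrid.2; dsimp only; omega, hgrid.1⟩
      · rw [hsouth] at hgrid ⊢
        exact ⟨hj₀, by dsimp only; omega, hgrid.1⟩
    | succ d ih =>
      have hprev := ih (by omega)
      rcases hq : slidePath (2 * r) c U (i₀ + j₀ + r + d + 1) with ⟨i, j⟩
      have hsum := slidePath_fst_add_snd (2 * r) c U (i₀ + j₀ + r + d + 1)
      rw [hq] at hprev hsum
      rw [← add_assoc, slidePath_succ, hq]
      exact H.nextCell_mem_freshRegion hprev (by dsimp only at hsum; omega)
  refine ⟨i₀, j₀, hj₀, hh, heast, hsmall, hdescent, fun k hk hk' => ?_⟩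
  have := hfresh (k - (i₀ + j₀ + r) - 1) (by omega)
  rwa [show i₀ + j₀ + r + (k - (i₀ + j₀ + r) - 1) + 1 = k by omega] at this

end StackInv

namespace SlideShape

variable {r c x : ℕ} {Q U : ℕ → ℕ → ℕ} {h : ℕ → ℕ} {i₀ j₀ : ℕ}

theorem slidePath_exit (S : SlideShape r c U h i₀ j₀) :
    slidePath (2 * r) c U (i₀ + j₀) = (i₀, j₀) :=
  S.descent 0 (Nat.zero_le r)

theorem slidePath_cases (S : SlideShape r c U h i₀ j₀) {i j : ℕ}
    (hpath : slidePath (2 * r) c U (i + j) = (i, j)) (hij : i + j ≤ 2 * r + c - 2) :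
    (i + j ≤ i₀ + j₀ ∧ (i, j) ∈ smallRegion c h) ∨ (j = j₀ ∧ i₀ ≤ i ∧ i ≤ i₀ + r) ∨
      (i₀ + j₀ + r < i + j ∧ (i, j) ∈ freshRegion r c h) := by
  rcases le_or_gt (i + j) (i₀ + j₀) with h1 | h1
  · exact Or.inl ⟨h1, hpath ▸ S.mem_smallRegion _ h1⟩
  rcases le_or_gt (i + j) (i₀ + j₀ + r) with h2 | h2
  · have := S.descent (i + j - (i₀ + j₀)) (by omega)
    rw [show i₀ + j₀ + (i + j - (i₀ + j₀)) = i + j by omega, hpath, Prod.mk.injEq] at this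
    exact Or.inr (Or.inl ⟨this.2, by omega, by omega⟩)
  · exact Or.inr (Or.inr ⟨h2, hpath ▸ S.mem_freshRegion _ h2 hij⟩)

theorem slideInto_eq_of_height_le (H : StackInv r c x Q U h) (S : SlideShape r c U h i₀ j₀)
    {m : ℕ} (hm : h j₀ ≤ m) (hmr : m ≤ r) :
    slideInto (2 * r) c U m = r * c + Q (m - h j₀) j₀ := by
  have hh := S.height_eq
  have hj₀ := S.col_lt
  have hpath := S.descent (m - i₀) (by omega)
  rw [show i₀ + (m - i₀) = m by omega] at hpath
  rw [slideInto_eq (k := i₀ + j₀ + (m - i₀)) (by omega) (by rw [hpath]), hpath,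
    H.shifted m j₀ hj₀ hm (by omega)]
  intro k hk
  rcases le_or_gt k (i₀ + j₀) with h1 | h1
  · have := monotone_slidePath_fst (2 * r) c U h1
    dsimp only at this
    rw [S.slidePath_exit] at this
    omega
  · have := S.descent (k - (i₀ + j₀)) (by omega)
    rw [show i₀ + j₀ + (k - (i₀ + j₀)) = k by omega] at this
    rw [this]
    dsimp only
    omega

theorem slideInto_le_of_lt_height (H : StackInv r c x Q U h) (S : SlideShape r c U h i₀ j₀)
    {m : ℕ} (hm : m < h j₀) : slideInto (2 * r) c U m ≤ r * c := by
  have hh := S.height_eq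
  have := H.height_le j₀ S.col_lt
  have := S.col_lt
  obtain ⟨k, hk, hrow, hfirst⟩ := exists_first_slidePath_fst_eq (R := 2 * r) (C := c) (T := U)
    (k := i₀ + j₀) (m := m) (by rw [S.slidePath_exit]; dsimp only; omega)
  rw [slideInto_eq (by omega) hrow hfirst]
  have := H.le_of_mem_smallRegion (S.mem_smallRegion k hk)
  rwa [hrow] at this

theorem gromotion_le_of_lt_height (H : StackInv r c x Q U h) (S : SlideShape r c U h i₀ j₀)
    {i j : ℕ} (hj : j < c) (hi : i < Function.update h j₀ i₀ j) :
    gromotion (2 * r) c U i j ≤ r * c := by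
  have hh := S.height_eq
  obtain ⟨hlt, hne⟩ : i < h j ∧ (i, j) ≠ (i₀, j₀) := by
    rcases eq_or_ne j j₀ with rfl | hne
    · rw [Function.update_self] at hi
      exact ⟨by omega, by simp only [ne_eq, Prod.mk.injEq]; omega⟩
    · rw [Function.update_of_ne hne] at hi
      exact ⟨hi, by simp [hne]⟩
  have := H.height_le j hj
  have hcorner : ¬(i = 2 * r - 1 ∧ j = c - 1) := by omega
  by_cases hpath : slidePath (2 * r) c U (i + j) = (i, j)
  · rw [gromotion_of_slidePath_eq hcorner (by omega) hpath]
    rcases S.slidePath_cases hpath (by omega) with ⟨hk, -⟩ | ⟨rfl, hi₀, -⟩ | ⟨-, hfresh⟩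
    · refine H.le_of_mem_smallRegion (S.mem_smallRegion _ ?_)
      by_contra hk'
      exact hne (by rw [← hpath, show i + j = i₀ + j₀ by omega, S.slidePath_exit])
    · exact absurd (show i = i₀ by omega) fun hi' => hne (by rw [hi'])
    · exact absurd (mk_mem_freshRegion.1 hfresh).2.1 (by omega)
  · rw [gromotion_of_slidePath_ne hcorner hpath]
    exact H.small i j hj hlt

theorem gromotion_eq_of_shifted (H : StackInv r c x Q U h) (S : SlideShape r c U h i₀ j₀)
    {i j : ℕ} (hj : j < c) (hi : Function.update h j₀ i₀ j ≤ i)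
    (hi' : i < r + Function.update h j₀ i₀ j) :
    gromotion (2 * r) c U i j = r * c + Q (i - Function.update h j₀ i₀ j) j := by
  have hh := S.height_eq
  have := H.height_le j hj
  have := H.height_le j₀ S.col_lt
  have := S.col_lt
  rcases eq_or_ne j j₀ with rfl | hne
  · rw [Function.update_self] at hi hi' ⊢
    have hcorner : ¬(i = 2 * r - 1 ∧ j = c - 1) := by omega
    have hpath := S.descent (i - i₀) (by omega)
    rw [show i₀ + j + (i - i₀) = i + j by omega, show i₀ + (i - i₀) = i by omega] at hpath
    have hnext := S.descent (i - i₀ + 1) (by omega)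
    rw [show i₀ + j + (i - i₀ + 1) = i + j + 1 by omega,
      show i₀ + (i - i₀ + 1) = i + 1 by omega] at hnext
    rw [gromotion_of_slidePath_eq hcorner (by omega) hpath, hnext,
      H.shifted (i + 1) j hj (by omega) (by omega), show i + 1 - h j = i - i₀ by omega]
  · rw [Function.update_of_ne hne] at hi hi' ⊢
    have hcorner : ¬(i = 2 * r - 1 ∧ j = c - 1) := by
      rintro ⟨rfl, rfl⟩
      have := H.height_antitone (show j₀ + 1 ≤ c - 1 by omega) hj
      have := S.height_succ_le (by omega)
      omega
    have hpath : slidePath (2 * r) c U (i + j) ≠ (i, j) := fun hpath => by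
      rcases S.slidePath_cases hpath (by omega) with ⟨-, hsmall⟩ | ⟨rfl, -⟩ | ⟨-, hfresh⟩
      · exact absurd (mk_mem_smallRegion.1 hsmall).2 (by omega)
      · exact hne rfl
      · exact absurd (mk_mem_freshRegion.1 hfresh).2.1 (by omega)
    rw [gromotion_of_slidePath_ne hcorner hpath, H.shifted i j hj hi hi']

theorem gromotion_bounds_of_fresh (H : StackInv r c x Q U h) (S : SlideShape r c U h i₀ j₀)
    {i j : ℕ} (hj : j < c) (hi : r + Function.update h j₀ i₀ j ≤ i) (hi' : i < 2 * r) :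
    2 * (r * c) < gromotion (2 * r) c U i j ∧
      gromotion (2 * r) c U i j ≤ 2 * (r * c) + (x + 1) := by
  by_cases hcorner : i = 2 * r - 1 ∧ j = c - 1
  · rw [hcorner.1, hcorner.2, gromotion_corner, H.maxEntry_eq]
    omega
  have hh := S.height_eq
  by_cases hpath : slidePath (2 * r) c U (i + j) = (i, j)
  · have hk : i₀ + j₀ + r ≤ i + j := by
      rcases S.slidePath_cases hpath (by omega) with ⟨-, hsmall⟩ | ⟨rfl, -, -⟩ | ⟨hk, -⟩
      · have := H.height_le j hj
        exact absurd (mk_mem_smallRegion.1 hsmall).2 (by omega)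
      · rw [Function.update_self] at hi
        omega
      · omega
    rw [gromotion_of_slidePath_eq hcorner (by omega) hpath]
    have := H.bounds_of_mem_freshRegion (S.mem_freshRegion (i + j + 1) (by omega) (by omega))
    omega
  · have hold : r + h j ≤ i := by
      rcases eq_or_ne j j₀ with rfl | hne
      · rw [Function.update_self] at hi
        by_contra
        have := S.descent r le_rfl
        rw [show i₀ + j + r = i + j by omega, show i₀ + r = i by omega] at this
        exact hpath this
      · rwa [Function.update_of_ne hne] at hi
    rw [gromotion_of_slidePath_ne hcorner hpath]
    have := H.fresh i j hj hold hi'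
    omega

theorem stackInv_gromotion (hQ : IsSYT r c Q) (H : StackInv r c x Q U h)
    (S : SlideShape r c U h i₀ j₀) :
    StackInv r c (x + 1) Q (gromotion (2 * r) c U) (Function.update h j₀ i₀) where
  height_succ_le j hj := by
    have hh := S.height_eq
    rcases eq_or_ne j j₀ with rfl | hne
    · rw [Function.update_self, Function.update_of_ne (by omega)]
      exact S.height_succ_le hj
    · rw [Function.update_of_ne hne]
      rcases eq_or_ne (j + 1) j₀ with heq | hne'
      · have := H.height_succ_le j hj
        rw [heq] at this ⊢
        rw [Function.update_self]
        omega
      · rw [Function.update_of_ne hne']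
        exact H.height_succ_le j hj
  height_le j hj := by
    have := H.height_le j hj
    have hh := S.height_eq
    rcases eq_or_ne j j₀ with rfl | hne
    · rw [Function.update_self]
      omega
    · rwa [Function.update_of_ne hne]
  sum_sub_height := by
    have hterm : ∀ j ∈ Finset.range c,
        r - Function.update h j₀ i₀ j = (r - h j) + if j = j₀ then 1 else 0 := by
      intro j hj
      have := H.height_le j (Finset.mem_range.1 hj)
      have hh := S.height_eq
      rcases eq_or_ne j j₀ with rfl | hne
      · rw [Function.update_self, if_pos rfl]
        omega
      · rw [Function.update_of_ne hne, if_neg hne, add_zero]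
    rw [Finset.sum_congr rfl hterm, Finset.sum_add_distrib, H.sum_sub_height, Finset.sum_ite_eq',
      if_pos (Finset.mem_range.2 S.col_lt)]
  small _ _ hj hi := S.gromotion_le_of_lt_height H hj hi
  shifted _ _ hj hi hi' := S.gromotion_eq_of_shifted H hj hi hi'
  fresh _ _ hj hi hi' := S.gromotion_bounds_of_fresh H hj hi hi'
  maxEntry_eq := by
    refine le_antisymm (maxEntry_le fun i j hi hj => ?_) ?_
    · rcases Nat.lt_or_ge i (Function.update h j₀ i₀ j) with h1 | h1
      · have := S.gromotion_le_of_lt_height H hj h1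
        omega
      rcases Nat.lt_or_ge i (r + Function.update h j₀ i₀ j) with h2 | h2
      · rw [S.gromotion_eq_of_shifted H hj h1 h2]
        have := (hQ.mem_Icc (show i - Function.update h j₀ i₀ j < r by omega) hj).2
        omega
      · exact (S.gromotion_bounds_of_fresh H hj h2 hi).2
    · have := S.col_lt
      have := H.height_le j₀ S.col_lt
      have := S.height_eq
      have := le_maxEntry (T := gromotion (2 * r) c U) (show 2 * r - 1 < 2 * r by omega)
        (show c - 1 < c by omega)
      rw [gromotion_corner, H.maxEntry_eq] at this
      omega

end SlideShape

def smallHeight (r c : ℕ) (U : ℕ → ℕ → ℕ) (j : ℕ) : ℕ :=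
  ((Finset.range r).filter fun i => U i j ≤ r * c).card

namespace StackInv

variable {r c x : ℕ} {Q U : ℕ → ℕ → ℕ} {h : ℕ → ℕ}

theorem smallHeight_eq (hQ : IsSYT r c Q) (H : StackInv r c x Q U h) {j : ℕ} (hj : j < c) :
    smallHeight r c U j = h j := by
  have := H.height_le j hj
  rw [smallHeight, ← Finset.card_range (h j)]
  congr 1
  ext i
  simp only [Finset.mem_filter, Finset.mem_range]
  constructor
  · rintro ⟨hi, hle⟩
    by_contra! hge
    have := H.mul_lt_of_height_le hQ hj hge (by omega)
    omega
  · exact fun hi => ⟨by omega, H.small i j hj hi⟩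

theorem congr_height (H : StackInv r c x Q U h) {h' : ℕ → ℕ} (hh : ∀ j < c, h' j = h j) :
    StackInv r c x Q U h' where
  height_succ_le j hj := by
    rw [hh j (by omega), hh (j + 1) hj]
    exact H.height_succ_le j hj
  height_le j hj := hh j hj ▸ H.height_le j hj
  sum_sub_height := by
    rw [Finset.sum_congr rfl fun j hj => by rw [hh j (Finset.mem_range.1 hj)]]
    exact H.sum_sub_height
  small i j hj := hh j hj ▸ H.small i j hj
  shifted i j hj := hh j hj ▸ H.shifted i j hj
  fresh i j hj := hh j hj ▸ H.fresh i j hj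
  maxEntry_eq := H.maxEntry_eq

theorem of_smallHeight (hQ : IsSYT r c Q) (H : StackInv r c x Q U h) :
    StackInv r c x Q U (smallHeight r c U) :=
  H.congr_height fun _ hj => H.smallHeight_eq hQ hj

end StackInv

section Orbit

variable {r c : ℕ} {P Q : ℕ → ℕ → ℕ}

theorem stackInv_stack (hP : IsSYT r c P) (hQ : IsSYT r c Q) :
    StackInv r c 0 Q (stack r c P Q) fun _ => r where
  height_succ_le _ _ := le_rfl
  height_le _ _ := le_rfl
  sum_sub_height := by simp
  small i j hj hi := by
    rw [stack, if_pos hi]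
    exact (hP.mem_Icc hi hj).2
  shifted i j hj hi hi' := by
    rw [stack, if_neg (by omega), add_comm]
  fresh _ _ _ hi hi' := by omega
  maxEntry_eq := by
    refine le_antisymm (maxEntry_le fun i j hi hj => ?_) ?_
    · rw [stack]
      split_ifs with hir
      · have := (hP.mem_Icc hir hj).2
        omega
      · have := (hQ.mem_Icc (show i - r < r by omega) hj).2
        omega
    · rcases Nat.eq_zero_or_pos (r * c) with hrc | hrc
      · omega
      obtain ⟨⟨i, j⟩, hij, hmax⟩ := hQ.2.2.surjOn (Set.mem_Icc.2 ⟨hrc, le_rfl⟩)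
      obtain ⟨hi, hj⟩ : i < r ∧ j < c := hij
      have := le_maxEntry (T := stack r c P Q) (show r + i < 2 * r by omega) hj
      rw [stack, if_neg (by omega), Nat.add_sub_cancel_left] at this
      dsimp only at hmax
      omega

/-- The height of the part of column `j` of `gromotion^[x] (stack r c P Q)` that comes
from `P`. -/
def stackHeight (r c : ℕ) (P Q : ℕ → ℕ → ℕ) (x j : ℕ) : ℕ :=
  smallHeight r c ((gromotion (2 * r) c)^[x] (stack r c P Q)) j

theorem stackInv_iterate (hP : IsSYT r c P) (hQ : IsSYT r c Q) {x : ℕ} (hx : x ≤ r * c) :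
    StackInv r c x Q ((gromotion (2 * r) c)^[x] (stack r c P Q)) (stackHeight r c P Q x) := by
  induction x with
  | zero => exact (stackInv_stack hP hQ).of_smallHeight hQ
  | succ x ih =>
    have H := ih (by omega)
    obtain ⟨i₀, j₀, S⟩ := H.exists_slideShape hQ (by omega)
    have H' := (S.stackInv_gromotion hQ H).of_smallHeight hQ
    rwa [← Function.iterate_succ_apply' (gromotion (2 * r) c)] at H'

theorem promPerm_succ (R C : ℕ) (T : ℕ → ℕ → ℕ) (i x : ℕ) :
    promPerm R C T i (x + 1) = (slideInto R C ((gromotion R C)^[x] T) i - 1) % (R * C) + 1 :=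
  rfl

/-- At step `x` of the orbit of `stack r c P Q`, the slide path leaves the entries of `P`
through column `j₀`. -/
structure IsExitColumn (r c : ℕ) (P Q : ℕ → ℕ → ℕ) (x j₀ : ℕ) : Prop where
  lt : j₀ < c
  stackHeight_succ : stackHeight r c P Q (x + 1) j₀ + 1 = stackHeight r c P Q x j₀
  stackHeight_succ_of_ne :
    ∀ j < c, j ≠ j₀ → stackHeight r c P Q (x + 1) j = stackHeight r c P Q x j
  promPerm_eq : ∀ m ≤ r, stackHeight r c P Q x j₀ ≤ m →
    promPerm (2 * r) c (stack r c P Q) m (x + 1) = r * c + Q (m - stackHeight r c P Q x j₀) j₀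
  promPerm_le : ∀ m < stackHeight r c P Q x j₀,
    promPerm (2 * r) c (stack r c P Q) m (x + 1) ≤ r * c

theorem exists_isExitColumn (hP : IsSYT r c P) (hQ : IsSYT r c Q) {x : ℕ} (hx : x < r * c) :
    ∃ j₀, IsExitColumn r c P Q x j₀ := by
  have H := stackInv_iterate hP hQ hx.le
  obtain ⟨i₀, j₀, S⟩ := H.exists_slideShape hQ hx
  have H' := S.stackInv_gromotion hQ H
  rw [← Function.iterate_succ_apply' (gromotion (2 * r) c)] at H'
  have hsucc : ∀ j < c,
      stackHeight r c P Q (x + 1) j = Function.update (stackHeight r c P Q x) j₀ i₀ j :=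
    fun j hj => H'.smallHeight_eq hQ hj
  have hh := S.height_eq
  have hj₀ := S.col_lt
  have h2rc : 2 * r * c = 2 * (r * c) := Nat.mul_assoc 2 r c
  refine ⟨j₀, hj₀, by rw [hsucc j₀ hj₀, Function.update_self, hh], fun j hj hne => ?_,
    fun m hmr hm => ?_, fun m hm => ?_⟩
  · rw [hsucc j hj, Function.update_of_ne hne]
  · obtain ⟨hq, hq'⟩ := hQ.mem_Icc (show m - stackHeight r c P Q x j₀ < r by omega) hj₀
    rw [promPerm_succ, S.slideInto_eq_of_height_le H hm hmr, h2rc, Nat.mod_eq_of_lt (by omega)]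
    omega
  · have := S.slideInto_le_of_lt_height H hm
    rw [promPerm_succ, h2rc, Nat.mod_eq_of_lt (by omega)]
    omega

end Orbit

/-! ## Promotion permutations of a stacked tableau -/

section Crossing

variable {r c : ℕ} {P Q : ℕ → ℕ → ℕ}

theorem stackHeight_zero (hP : IsSYT r c P) (hQ : IsSYT r c Q) {j : ℕ} (hj : j < c) :
    stackHeight r c P Q 0 j = r :=
  (stackInv_stack hP hQ).smallHeight_eq hQ hj

theorem stackHeight_mul_eq_zero (hP : IsSYT r c P) (hQ : IsSYT r c Q) {j : ℕ} (hj : j < c) :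
    stackHeight r c P Q (r * c) j = 0 :=
  (stackInv_iterate hP hQ le_rfl).height_eq_zero hj

theorem stackHeight_succ (hP : IsSYT r c P) (hQ : IsSYT r c Q) {x j : ℕ} (hx : x < r * c)
    (hj : j < c) :
    stackHeight r c P Q (x + 1) j ≤ stackHeight r c P Q x j ∧
      stackHeight r c P Q x j ≤ stackHeight r c P Q (x + 1) j + 1 := by
  obtain ⟨j₀, E⟩ := exists_isExitColumn hP hQ hx
  rcases eq_or_ne j j₀ with rfl | hne
  · have := E.stackHeight_succ
    omega
  · have := E.stackHeight_succ_of_ne j hj hne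
    omega

theorem stackHeight_antitone (hP : IsSYT r c P) (hQ : IsSYT r c Q) {x y j : ℕ} (hxy : x ≤ y)
    (hy : y ≤ r * c) (hj : j < c) : stackHeight r c P Q y j ≤ stackHeight r c P Q x j := by
  induction y, hxy using Nat.le_induction with
  | base => exact le_rfl
  | succ y _ ih => exact (stackHeight_succ hP hQ (by omega) hj).1.trans (ih (by omega))

theorem exists_stackHeight_drop (hP : IsSYT r c P) (hQ : IsSYT r c Q) {t j : ℕ} (ht : t < r)
    (hj : j < c) :
    ∃ x < r * c, stackHeight r c P Q x j = t + 1 ∧ stackHeight r c P Q (x + 1) j = t ∧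
      IsExitColumn r c P Q x j := by
  classical
  have hrc : 0 < r * c := Nat.mul_pos (by omega) (by omega)
  have hex : ∃ x, x < r * c ∧ stackHeight r c P Q (x + 1) j ≤ t :=
    ⟨r * c - 1, by omega, by rw [Nat.sub_add_cancel hrc, stackHeight_mul_eq_zero hP hQ hj]; omega⟩
  obtain ⟨hx, hle⟩ := Nat.find_spec hex
  have hprev : t < stackHeight r c P Q (Nat.find hex) j := by
    rcases Nat.eq_zero_or_pos (Nat.find hex) with h0 | hpos
    · rwa [h0, stackHeight_zero hP hQ hj]
    · have := Nat.find_min hex (Nat.sub_one_lt_of_lt hpos)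
      rw [Nat.sub_add_cancel hpos] at this
      omega
  generalize Nat.find hex = x at hx hle hprev
  have := stackHeight_succ hP hQ hx hj
  obtain ⟨j₀, E⟩ := exists_isExitColumn hP hQ hx
  obtain rfl : j₀ = j := by
    by_contra hne
    have := E.stackHeight_succ_of_ne j hj (Ne.symm hne)
    omega
  exact ⟨x, hx, by omega, by omega, E⟩

/-- `r * c - x`, where `x` is the step of the orbit at which the part of column `j` coming
from `P` shrinks to height `t`. -/
def leaveIndex (r c : ℕ) (P Q : ℕ → ℕ → ℕ) (t j : ℕ) : ℕ :=
  ((Finset.range (r * c)).filter fun x => stackHeight r c P Q (x + 1) j ≤ t).card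

theorem leaveIndex_stackHeight (hP : IsSYT r c P) (hQ : IsSYT r c Q) {x j : ℕ} (hx : x < r * c)
    (hj : j < c) (hdrop : stackHeight r c P Q (x + 1) j < stackHeight r c P Q x j) :
    leaveIndex r c P Q (stackHeight r c P Q (x + 1) j) j = r * c - x := by
  rw [leaveIndex, ← Nat.card_Ico x (r * c)]
  congr 1
  ext y
  simp only [Finset.mem_filter, Finset.mem_range, Finset.mem_Ico]
  constructor
  · rintro ⟨hy, hle⟩
    refine ⟨?_, hy⟩
    by_contra! hyx
    have := stackHeight_antitone hP hQ (show y + 1 ≤ x by omega) hx.le hj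
    omega
  · rintro ⟨hxy, hy⟩
    exact ⟨hy, stackHeight_antitone hP hQ (by omega) (by omega) hj⟩

theorem gridStrictMono_leaveIndex (hP : IsSYT r c P) (hQ : IsSYT r c Q) :
    GridStrictMono r c (leaveIndex r c P Q) where
  row t j j' ht hjj' hj' := by
    obtain ⟨x, hx, hxj, hxj1, E⟩ := exists_stackHeight_drop hP hQ ht hj'
    refine Finset.card_lt_card (Finset.ssubset_iff_of_subset (fun y hy => ?_) |>.2 ⟨x, ?_, ?_⟩)
    · simp only [Finset.mem_filter, Finset.mem_range] at hy ⊢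
      exact ⟨hy.1, ((stackInv_iterate hP hQ hy.1).height_antitone hjj'.le hj').trans hy.2⟩
    · simp [hx, hxj1]
    · have := E.stackHeight_succ_of_ne j (by omega) hjj'.ne
      have := (stackInv_iterate hP hQ hx.le).height_antitone hjj'.le hj'
      simp only [Finset.mem_filter, Finset.mem_range, not_and, not_le]
      omega
  col t t' j htt' ht' hj := by
    obtain ⟨x, hx, hxj, hxj1, -⟩ := exists_stackHeight_drop hP hQ ht' hj
    refine Finset.card_lt_card (Finset.ssubset_iff_of_subset (fun y hy => ?_) |>.2 ⟨x, ?_, ?_⟩)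
    · simp only [Finset.mem_filter, Finset.mem_range] at hy ⊢
      omega
    · simp [hx, hxj1]
    · simp only [Finset.mem_filter, Finset.mem_range, not_and, not_le]
      omega

theorem pointsNE_promPerm_stack (hP : IsSYT r c P) (hQ : IsSYT r c Q) {m : ℕ} (hmr : m ≤ r) :
    pointsNE (r * c) (promPerm (2 * r) c (stack r c P Q) m) =
      bandPoints Q (leaveIndex r c P Q) m c := by
  ext p
  constructor
  · rintro ⟨x, hx1, hxn, hgt, rfl⟩
    obtain ⟨y, rfl⟩ : ∃ y, x = y + 1 := ⟨x - 1, by omega⟩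
    obtain ⟨j₀, E⟩ := exists_isExitColumn hP hQ (show y < r * c by omega)
    have hm' : stackHeight r c P Q y j₀ ≤ m := by
      by_contra! hlt
      have := E.promPerm_le m hlt
      omega
    have hdrop := E.stackHeight_succ
    rw [E.promPerm_eq m hmr hm']
    refine ⟨j₀, E.lt, m - stackHeight r c P Q y j₀, stackHeight r c P Q (y + 1) j₀, by omega, ?_⟩
    rw [leaveIndex_stackHeight hP hQ (by omega) E.lt (by omega)]
    ext
    · push_cast
      ring
    · push_cast [Nat.cast_sub (show y ≤ r * c by omega)]
      ring
  · rintro ⟨j, hj, s, t, hst, rfl⟩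
    obtain ⟨x, hx, hxj, hxj1, E⟩ := exists_stackHeight_drop hP hQ (show t < r by omega) hj
    have hval := E.promPerm_eq m hmr (by omega)
    rw [hxj, show m - (t + 1) = s by omega] at hval
    have hB : leaveIndex r c P Q t j = r * c - x :=
      hxj1 ▸ leaveIndex_stackHeight hP hQ hx hj (by omega)
    have := (hQ.mem_Icc (show s < r by omega) hj).1
    refine ⟨x + 1, by omega, by omega, by omega, ?_⟩
    rw [hval, hB]
    ext
    · push_cast
      ring
    · push_cast [Nat.cast_sub hx.le]
      ring

end Crossing

/-- For `S = stack(P, Q)` with `P, Q ∈ SYT(r × c)`, `n = rc`, and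
`ρ_i := prom_i(S)`, for all `0 ≤ k ≤ r - 1` the point set `𝒫^NE(ρ_{r-k})` equals the
`k`-th iterated skeleton `𝒮^k(𝒫^NE(ρ_r), ↙)`. -/
theorem pointsNE_promPerm_eq_skeletonIter_SW (r c : ℕ) (P Q : ℕ → ℕ → ℕ)
    (hP : IsSYT r c P) (hQ : IsSYT r c Q) (k : ℕ) (hk : k ≤ r - 1) :
    pointsNE (r * c) (promPerm (2 * r) c (stack r c P Q) (r - k)) =
      skeletonIter dirSW
        (pointsNE (r * c) (promPerm (2 * r) c (stack r c P Q) r)) k := by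
  induction k with
  | zero => rfl
  | succ k ih =>
    rw [skeletonIter_succ, ← ih (by omega), pointsNE_promPerm_stack hP hQ (m := r - k) (by omega),
      pointsNE_promPerm_stack hP hQ (m := r - (k + 1)) (by omega),
      skeleton_bandPoints hQ.gridStrictMono (gridStrictMono_leaveIndex hP hQ) (by omega)
        (Nat.sub_le r k), show r - k - 1 = r - (k + 1) by omega]

end PromRS
end

section
/- Let P, Q ∈ SYT(r×c), n = rc, S = stack(P,Q), with x_{ij} the entry in row i, column j of Q, y_{ij} the entry in row i, column j of ∂(P), S_k := {(x_{sj}, y_{tj}) : 1 ≤ j ≤ c, 1 ≤ s,t ≤ r, s+t−1 = k} for 1 ≤ k ≤ 2r−1, and S_0 = S_{2r} := ∅. Then for r ≤ k ≤ 2r−1 the skeleton satisfies 𝒮(S_k, ↗) = S_{k+1}, and for 1 ≤ k ≤ r the skeleton satisfies 𝒮(S_k, ↙) = S_{k−1}. -/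
namespace PromRS

/-!
For `r ≤ k` the points of `S_k` in column `j` are the `(x_{sj}, y_{tj})` with `s + t = k + 1`.
Along a column `x` increases and `y` decreases, so it is a `↗`-antichain. Since `Q` and `∂P`
increase along rows and columns, each point of column `j + 1` lies strictly `↗`-above the point of
column `j` with the same `(s, t)`, and no point of a later column lies weakly `↗`-below a point of
an earlier one. Hence the shadow lines of `S_k` are its columns, and the skeleton of a column
consists of its inner corners `(x_{s+1,j}, y_{tj})`, which form column `j` of `S_{k+1}`.

The `↙` case is the `↗` case for both grids turned by a half-turn and negated: this exchanges `↙`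
with `↗` and `S_k` with `S_{2r-k}`.

`∂P` increases along rows and columns because the cells vacated by successive
deletion–rectification steps are outer corners of the shrinking shape.
-/

/-! ### Evacuation increases along rows and columns -/

theorem getD_map_range {α : Type*} (f : ℕ → α) (n i : ℕ) (d : α) :
    ((List.range n).map f).getD i d = if i < n then f i else d := by
  split_ifs with h
  · rw [List.getD_eq_getElem _ _ (by simpa using h)]
    simp
  · exact List.getD_eq_default _ _ (by simpa using h)

theorem getD_filter_ne_nil_map_range {F : ℕ → List ℕ}
    (hF : ∀ a b, a ≤ b → F a = [] → F b = []) (n i : ℕ) :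
    (((List.range n).map F).filter fun row => decide (row ≠ [])).getD i [] =
      if i < n then F i else [] := by
  induction n with
  | zero => simp
  | succ n ih =>
    by_cases hn : F n = []
    · rw [List.range_succ, List.map_append, List.filter_append]
      simp only [List.map_cons, List.map_nil, hn, ne_eq, not_true_eq_false, decide_false,
        Bool.false_eq_true, not_false_eq_true, List.filter_cons_of_neg, List.filter_nil,
        List.append_nil, ih]
      by_cases hi : i < n
      · rw [if_pos hi, if_pos (by omega)]
      · rw [if_neg hi]
        split_ifs with hi'
        · rw [show i = n by omega, hn]
        · rfl
    · have hall : ∀ a < n + 1, F a ≠ [] := fun a ha h => hn (hF a n (by omega) h)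
      rw [List.filter_eq_self.mpr (by simpa using hall), getD_map_range]

def rowLen (T : List (List ℕ)) (i : ℕ) : ℕ := (T.getD i []).length

theorem rowLen_eq_zero {T : List (List ℕ)} {i : ℕ} (h : T.length ≤ i) : rowLen T i = 0 := by
  rw [rowLen, List.getD_eq_default _ _ h, List.length_nil]

theorem length_flatten_eq_sum_rowLen {T : List (List ℕ)} {M : ℕ} (hM : T.length ≤ M) :
    T.flatten.length = ∑ i ∈ Finset.range M, rowLen T i := by
  induction T generalizing M with
  | nil => simp [rowLen]
  | cons row T ih =>
    obtain ⟨M, rfl⟩ := Nat.exists_eq_add_of_le' (by simp at hM; omega : 0 < M)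
    rw [List.flatten_cons, List.length_append, Finset.sum_range_succ', ih (by simpa using hM)]
    simp [rowLen, add_comm]

theorem rowLen_le_length_flatten (T : List (List ℕ)) (i : ℕ) : rowLen T i ≤ T.flatten.length := by
  by_cases h : i < T.length
  · rw [length_flatten_eq_sum_rowLen le_rfl]
    exact Finset.single_le_sum (fun _ _ => Nat.zero_le _) (Finset.mem_range.mpr h)
  · rw [rowLen_eq_zero (by omega)]
    exact Nat.zero_le _

structure IsPartitionShape (T : List (List ℕ)) : Prop where
  antitone : Antitone (rowLen T)
  rowLen_pos : ∀ i < T.length, 0 < rowLen T i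

theorem extL_eq_top_iff (T : List (List ℕ)) (a b : ℕ) : extL T (a, b) = ⊤ ↔ rowLen T a ≤ b := by
  simp only [extL, rowLen]
  split_ifs with h <;> simpa using h

theorem nextCellL_cases (T : List (List ℕ)) (p : ℕ × ℕ) :
    nextCellL T p = p ∨
    (nextCellL T p = (p.1, p.2 + 1) ∧ p.2 + 1 < rowLen T p.1) ∨
    (nextCellL T p = (p.1 + 1, p.2) ∧ p.2 < rowLen T (p.1 + 1)) := by
  unfold nextCellL
  split_ifs with hstuck hlt
  · exact Or.inl rfl
  · refine Or.inr (Or.inl ⟨rfl, ?_⟩)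
    have := (extL_eq_top_iff T _ _).not.mp (ne_top_of_lt hlt)
    omega
  · refine Or.inr (Or.inr ⟨rfl, ?_⟩)
    have hS : extL T (p.1 + 1, p.2) ≠ ⊤ := fun hS =>
      hlt (hS ▸ lt_top_iff_ne_top.mpr fun hE => hstuck ⟨hE, hS⟩)
    have := (extL_eq_top_iff T _ _).not.mp hS
    omega

theorem nextCellL_eq_self_iff (T : List (List ℕ)) (p : ℕ × ℕ) :
    nextCellL T p = p ↔ rowLen T p.1 ≤ p.2 + 1 ∧ rowLen T (p.1 + 1) ≤ p.2 := by
  rw [← extL_eq_top_iff, ← extL_eq_top_iff]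
  unfold nextCellL
  split_ifs with hstuck hlt
  · exact iff_of_true rfl hstuck
  · exact iff_of_false (fun h => by simpa using congrArg Prod.snd h) hstuck
  · exact iff_of_false (fun h => by simpa using congrArg Prod.fst h) hstuck

section PartitionShape

variable {T : List (List ℕ)}

theorem IsPartitionShape.jdtPath_mem (hT : IsPartitionShape T) (hN : 0 < T.flatten.length)
    (k : ℕ) : (jdtPath T k).2 < rowLen T (jdtPath T k).1 := by
  induction k with
  | zero =>
    by_contra h
    have hzero : ∀ i, rowLen T i = 0 := fun i => by
      have := hT.antitone (Nat.zero_le i)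
      simp only [jdtPath] at h
      omega
    simp [length_flatten_eq_sum_rowLen le_rfl, hzero] at hN
  | succ k ih =>
    rcases nextCellL_cases T (jdtPath T k) with h | ⟨h, he⟩ | ⟨h, he⟩ <;>
      simp only [jdtPath, h] <;> assumption

/-- A cell `p` of the shape forces the `(p.1 + 1) × (p.2 + 1)` rectangle into the shape. -/
theorem IsPartitionShape.add_lt_length_flatten (hT : IsPartitionShape T) {p : ℕ × ℕ}
    (hp : p.2 < rowLen T p.1) : p.1 + p.2 < T.flatten.length := by
  have hlen : p.1 < T.length := by
    by_contra h
    rw [rowLen_eq_zero (by omega)] at hp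
    omega
  calc p.1 + p.2 < (p.1 + 1) * (p.2 + 1) := by nlinarith
    _ = ∑ _i ∈ Finset.range (p.1 + 1), (p.2 + 1) := by simp
    _ ≤ ∑ i ∈ Finset.range (p.1 + 1), rowLen T i :=
        Finset.sum_le_sum fun i hi => (hT.antitone (Finset.mem_range_succ_iff.mp hi)).trans' hp
    _ ≤ ∑ i ∈ Finset.range T.length, rowLen T i :=
        Finset.sum_le_sum_of_subset (Finset.range_subset_range.mpr hlen)
    _ = T.flatten.length := (length_flatten_eq_sum_rowLen le_rfl).symm

/-- Every move of the sliding cell increases `p.1 + p.2`, so within the shape it has stopped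
after `T.flatten.length` steps. -/
theorem IsPartitionShape.nextCellL_vacated (hT : IsPartitionShape T) (hN : 0 < T.flatten.length) :
    nextCellL T (vacated T) = vacated T := by
  have key : ∀ k, nextCellL T (jdtPath T k) = jdtPath T k ∨
      (jdtPath T k).1 + (jdtPath T k).2 = k := by
    intro k
    induction k with
    | zero => exact Or.inr rfl
    | succ k ih =>
      rcases ih with hstuck | hsum
      · exact Or.inl (by simp only [jdtPath, hstuck])
      rcases nextCellL_cases T (jdtPath T k) with h | ⟨h, -⟩ | ⟨h, -⟩
      · exact Or.inl (by simp only [jdtPath, h])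
      all_goals exact Or.inr (by simp only [jdtPath, h]; omega)
  refine (key _).resolve_right fun hsum => ?_
  have := hT.add_lt_length_flatten (hT.jdtPath_mem hN T.flatten.length)
  omega

theorem IsPartitionShape.vacated_isCorner (hT : IsPartitionShape T) (hN : 0 < T.flatten.length) :
    (vacated T).2 + 1 = rowLen T (vacated T).1 ∧ rowLen T ((vacated T).1 + 1) ≤ (vacated T).2 := by
  have hmem := hT.jdtPath_mem hN T.flatten.length
  have hstop := (nextCellL_eq_self_iff T _).mp (hT.nextCellL_vacated hN)
  rw [← vacated] at hmem
  omega

theorem IsPartitionShape.rowLen_delta (hT : IsPartitionShape T) (hN : 0 < T.flatten.length)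
    (i : ℕ) : rowLen (delta T) i = rowLen T i - if i = (vacated T).1 then 1 else 0 := by
  obtain ⟨hv, hbelow⟩ := hT.vacated_isCorner hN
  rw [delta]
  generalize vacated T = v at *
  obtain ⟨vi, vj⟩ := v
  dsimp only at hv hbelow ⊢
  set F : ℕ → List ℕ := fun a =>
    (List.range ((T.getD a []).length - if a = vi then 1 else 0)).map fun j => slidValue T a j
    with hF
  have hlen : ∀ a, (F a).length = rowLen T a - if a = vi then 1 else 0 := by simp [hF, rowLen]
  -- only row `vi` shrinks, and if it empties then `vj = 0` and all rows below it are empty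
  have hprop : ∀ a b, a ≤ b → F a = [] → F b = [] := by
    intro a b hab ha
    rw [← List.length_eq_zero_iff, hlen] at ha ⊢
    obtain rfl | hab := eq_or_lt_of_le hab
    · exact ha
    obtain rfl | hne := eq_or_ne a vi
    · have h1 := hT.antitone (show a + 1 ≤ b by omega)
      rw [if_pos rfl] at ha
      rw [if_neg hab.ne']
      omega
    · have h1 := hT.antitone hab.le
      rw [if_neg hne] at ha
      split_ifs <;> omega
  have hrow := getD_filter_ne_nil_map_range hprop T.length i
  rw [rowLen, hrow]
  by_cases hi : i < T.length
  · rw [if_pos hi, hlen]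
  · rw [if_neg hi, rowLen_eq_zero (by omega), List.length_nil, Nat.zero_sub]

theorem isPartitionShape_delta (hT : IsPartitionShape T) (hN : 0 < T.flatten.length) :
    IsPartitionShape (delta T) where
  antitone := by
    obtain ⟨hv, hbelow⟩ := hT.vacated_isCorner hN
    refine antitone_nat_of_succ_le fun i => ?_
    rw [hT.rowLen_delta hN, hT.rowLen_delta hN]
    have := hT.antitone (show i ≤ i + 1 by omega)
    generalize (vacated T).1 = v at *
    split_ifs with h1 h2 h2 <;> subst_vars <;> omega
  rowLen_pos i hi := by
    have hmem : (delta T).getD i [] ∈ delta T := by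
      rw [List.getD_eq_getElem _ _ hi]
      exact List.getElem_mem _
    exact List.length_pos_iff.mpr (of_decide_eq_true (List.mem_filter.mp hmem).2)

theorem IsPartitionShape.length_flatten_delta (hT : IsPartitionShape T)
    (hN : 0 < T.flatten.length) : (delta T).flatten.length = T.flatten.length - 1 := by
  obtain ⟨hv, -⟩ := hT.vacated_isCorner hN
  have hvlen : (vacated T).1 < T.length := by
    by_contra h
    rw [rowLen_eq_zero (by omega)] at hv
    omega
  have hdlen : (delta T).length ≤ T.length := (List.length_filter_le _ _).trans (by simp)
  have hsum : ∑ i ∈ Finset.range T.length, rowLen (delta T) i + 1 =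
      ∑ i ∈ Finset.range T.length, rowLen T i := by
    have hone : ∑ i ∈ Finset.range T.length, (if i = (vacated T).1 then 1 else 0) = 1 := by
      simp [hvlen]
    rw [← hone, ← Finset.sum_add_distrib]
    refine Finset.sum_congr rfl fun i _ => ?_
    rw [hT.rowLen_delta hN]
    split_ifs with h
    · subst h
      omega
    · rfl
  rw [length_flatten_eq_sum_rowLen hdlen, length_flatten_eq_sum_rowLen le_rfl, ← hsum]
  rfl

theorem IsPartitionShape.iterate_delta (hT : IsPartitionShape T) {k : ℕ}
    (hk : k ≤ T.flatten.length) :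
    IsPartitionShape (delta^[k] T) ∧ (delta^[k] T).flatten.length = T.flatten.length - k := by
  induction k with
  | zero => exact ⟨hT, rfl⟩
  | succ k ih =>
    obtain ⟨hTk, hNk⟩ := ih (by omega)
    rw [Function.iterate_succ_apply']
    exact ⟨isPartitionShape_delta hTk (by omega),
      by rw [hTk.length_flatten_delta (by omega), hNk]; omega⟩

theorem IsPartitionShape.rowLen_iterate_delta_succ (hT : IsPartitionShape T) {k : ℕ}
    (hk : k < T.flatten.length) (i : ℕ) :
    rowLen (delta^[k + 1] T) i =
      rowLen (delta^[k] T) i - if i = (vacated (delta^[k] T)).1 then 1 else 0 := by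
  obtain ⟨hTk, hNk⟩ := hT.iterate_delta hk.le
  rw [Function.iterate_succ_apply', hTk.rowLen_delta (by omega)]

theorem IsPartitionShape.rowLen_iterate_delta_anti (hT : IsPartitionShape T) (i : ℕ) {k m : ℕ}
    (hkm : k ≤ m) (hm : m ≤ T.flatten.length) :
    rowLen (delta^[m] T) i ≤ rowLen (delta^[k] T) i := by
  induction m, hkm using Nat.le_induction with
  | base => exact le_rfl
  | succ m _ ih =>
    rw [hT.rowLen_iterate_delta_succ (by omega)]
    exact (Nat.sub_le _ _).trans (ih (by omega))

theorem IsPartitionShape.rowLen_of_vacated_iterate_delta (hT : IsPartitionShape T) {k i j : ℕ}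
    (hk : k < T.flatten.length) (hv : vacated (delta^[k] T) = (i, j)) :
    rowLen (delta^[k] T) i = j + 1 ∧ rowLen (delta^[k + 1] T) i = j ∧
      rowLen (delta^[k] T) (i + 1) ≤ j := by
  obtain ⟨hTk, hNk⟩ := hT.iterate_delta hk.le
  have hcorner := hTk.vacated_isCorner (by omega)
  rw [hv] at hcorner
  rw [hT.rowLen_iterate_delta_succ hk, hv, if_pos rfl]
  dsimp only at hcorner
  omega

theorem IsPartitionShape.exists_vacated_iterate_delta (hT : IsPartitionShape T) {i j : ℕ}
    (hij : j < rowLen T i) : ∃ k < T.flatten.length, vacated (delta^[k] T) = (i, j) := by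
  set N := T.flatten.length
  have hN : 0 < N := (Nat.zero_le j).trans_lt (hij.trans_le (rowLen_le_length_flatten T i))
  have hend : rowLen (delta^[N] T) i = 0 := by
    have := rowLen_le_length_flatten (delta^[N] T) i
    rw [(hT.iterate_delta le_rfl).2, Nat.sub_self] at this
    omega
  -- the first step at which row `i` has at most `j` cells
  obtain ⟨k, hk, hk1⟩ := Nat.exists_not_and_succ_of_not_zero_of_exists
    (p := fun n => N ≤ n ∨ rowLen (delta^[n] T) i ≤ j)
    (by simp only [Function.iterate_zero, id]; omega)
    ⟨N, Or.inl le_rfl⟩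
  push Not at hk
  have hk1 : rowLen (delta^[k + 1] T) i ≤ j :=
    hk1.elim (fun _ => by rw [show k + 1 = N by omega, hend]; exact Nat.zero_le j) id
  refine ⟨k, hk.1, ?_⟩
  rw [hT.rowLen_iterate_delta_succ hk.1] at hk1
  have hvi : (vacated (delta^[k] T)).1 = i := by
    by_contra h
    rw [if_neg (Ne.symm h)] at hk1
    omega
  obtain ⟨hTk, hNk⟩ := hT.iterate_delta hk.1.le
  have hcorner := (hTk.vacated_isCorner (by omega)).1
  rw [if_pos hvi.symm] at hk1
  rw [hvi] at hcorner
  exact Prod.ext hvi (by omega)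

theorem IsPartitionShape.evacEntry_eq_of_vacated (hT : IsPartitionShape T) {k i j : ℕ}
    (hk : k < T.flatten.length) (hv : vacated (delta^[k] T) = (i, j)) :
    evacEntry T i j = T.flatten.length - k := by
  have hunique : ∀ m < T.flatten.length, vacated (delta^[m] T) = (i, j) → m = k := by
    intro m hm hvm
    have h := hT.rowLen_of_vacated_iterate_delta hk hv
    have h' := hT.rowLen_of_vacated_iterate_delta hm hvm
    rcases lt_trichotomy m k with hmk | rfl | hkm
    · have := hT.rowLen_iterate_delta_anti i (show m + 1 ≤ k by omega) hk.le
      omega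
    · rfl
    · have := hT.rowLen_iterate_delta_anti i (show k + 1 ≤ m by omega) hm.le
      omega
  set p : ℕ → Bool := fun m => decide (vacated (delta^[m] T) = (i, j))
  obtain ⟨m, hm⟩ := Option.isSome_iff_exists.mp
    (List.find?_isSome (p := p).mpr ⟨k, List.mem_range.mpr hk, decide_eq_true hv⟩)
  have hmk := hunique m (List.mem_range.mp (List.mem_of_find?_eq_some hm))
    (by simpa [p] using List.find?_some hm)
  rw [evacEntry, hm, hmk]

theorem IsPartitionShape.evacEntry_lt_right (hT : IsPartitionShape T) {i j : ℕ}
    (h : j + 1 < rowLen T i) : evacEntry T i j < evacEntry T i (j + 1) := by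
  obtain ⟨k, hk, hv⟩ := hT.exists_vacated_iterate_delta (show j < rowLen T i by omega)
  obtain ⟨k', hk', hv'⟩ := hT.exists_vacated_iterate_delta h
  have hlen := (hT.rowLen_of_vacated_iterate_delta hk hv).1
  have hlen' := (hT.rowLen_of_vacated_iterate_delta hk' hv').1
  have hkk' : k' < k := by
    by_contra! hle
    have := hT.rowLen_iterate_delta_anti i hle hk'.le
    omega
  rw [hT.evacEntry_eq_of_vacated hk hv, hT.evacEntry_eq_of_vacated hk' hv']
  omega

theorem IsPartitionShape.evacEntry_lt_down (hT : IsPartitionShape T) {i j : ℕ}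
    (h : j < rowLen T (i + 1)) : evacEntry T i j < evacEntry T (i + 1) j := by
  obtain ⟨k, hk, hv⟩ :=
    hT.exists_vacated_iterate_delta (h.trans_le (hT.antitone (Nat.le_succ i)))
  obtain ⟨k', hk', hv'⟩ := hT.exists_vacated_iterate_delta h
  have hbelow := (hT.rowLen_of_vacated_iterate_delta hk hv).2.2
  have hlen' := (hT.rowLen_of_vacated_iterate_delta hk' hv').1
  have hkk' : k' < k := by
    by_contra! hle
    have := hT.rowLen_iterate_delta_anti (i + 1) hle hk'.le
    omega
  rw [hT.evacEntry_eq_of_vacated hk hv, hT.evacEntry_eq_of_vacated hk' hv']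
  omega

end PartitionShape

theorem rowLen_toListT (r c : ℕ) (P : ℕ → ℕ → ℕ) (i : ℕ) :
    rowLen (toListT r c P) i = if i < r then c else 0 := by
  rw [rowLen, toListT, getD_map_range]
  split_ifs <;> simp

theorem isPartitionShape_toListT {r c : ℕ} (hc : 0 < c) (P : ℕ → ℕ → ℕ) :
    IsPartitionShape (toListT r c P) where
  antitone i i' hii' := by
    simp only [rowLen_toListT]
    split_ifs <;> omega
  rowLen_pos i hi := by
    rw [rowLen_toListT, if_pos (by simpa [toListT] using hi)]
    exact hc

theorem entryL_evacL {T : List (List ℕ)} {i j : ℕ} (hi : i < T.length) (hj : j < rowLen T i) :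
    entryL (evacL T) i j = evacEntry T i j := by
  rw [entryL, evacL, getD_map_range, if_pos hi, getD_map_range,
    if_pos (show j < (T.getD i []).length from hj)]

theorem lt_of_strictMonoOn_grid {x : ℕ → ℕ → ℤ} {r c : ℕ}
    (hx : StrictMonoOn (fun p : ℕ × ℕ => x p.1 p.2) (Set.Icc (1, 1) (r, c))) {s j s' j' : ℕ}
    (h : 1 ≤ s ∧ 1 ≤ j ∧ s' ≤ r ∧ j' ≤ c ∧ s ≤ s' ∧ j ≤ j' ∧ (s < s' ∨ j < j')) :
    x s j < x s' j' :=
  hx (a := (s, j)) (b := (s', j')) ⟨⟨h.1, h.2.1⟩, by omega, by omega⟩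
    ⟨⟨by omega, by omega⟩, h.2.2.1, h.2.2.2.1⟩ (Prod.mk_lt_mk.mpr (by omega))

theorem strictMonoOn_grid_of_lt_succ {f : ℕ → ℕ → ℕ} {R C : ℕ}
    (hrow : ∀ i j, i < R → j + 1 < C → f i j < f i (j + 1))
    (hcol : ∀ i j, i + 1 < R → j < C → f i j < f (i + 1) j) :
    StrictMonoOn (fun p : ℕ × ℕ => (f (p.1 - 1) (p.2 - 1) : ℤ)) (Set.Icc (1, 1) (R, C)) := by
  have hr : ∀ i < R, StrictMonoOn (f i) (Set.Iic (C - 1)) := fun i hi =>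
    strictMonoOn_Iic_of_lt_succ fun j hj => by
      simpa [Order.succ_eq_add_one] using hrow i j hi (by omega)
  have hc : ∀ j < C, StrictMonoOn (f · j) (Set.Iic (R - 1)) := fun j hj =>
    strictMonoOn_Iic_of_lt_succ fun i hi => by
      simpa [Order.succ_eq_add_one] using hcol i j (by omega) hj
  rintro ⟨s, j⟩ ⟨⟨hs1, hj1⟩, hs2, hj2⟩ ⟨s', j'⟩ ⟨⟨hs1', hj1'⟩, hs2', hj2'⟩ hlt
  simp only [Prod.mk_lt_mk] at hlt
  have hcol_le : f (s - 1) (j - 1) ≤ f (s' - 1) (j - 1) :=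
    (hc (j - 1) (by omega)).monotoneOn (show s - 1 ≤ R - 1 by omega)
      (show s' - 1 ≤ R - 1 by omega) (by omega)
  have hrow_le : f (s' - 1) (j - 1) ≤ f (s' - 1) (j' - 1) :=
    (hr (s' - 1) (by omega)).monotoneOn (show j - 1 ≤ C - 1 by omega)
      (show j' - 1 ≤ C - 1 by omega) (by omega)
  dsimp only
  rcases hlt with ⟨hss, -⟩ | ⟨-, hjj⟩
  · have := (hc (j - 1) (by omega)) (show s - 1 ≤ R - 1 by omega)
      (show s' - 1 ≤ R - 1 by omega) (show s - 1 < s' - 1 by omega)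
    exact_mod_cast this.trans_le hrow_le
  · have := (hr (s' - 1) (by omega)) (show j - 1 ≤ C - 1 by omega)
      (show j' - 1 ≤ C - 1 by omega) (show j - 1 < j' - 1 by omega)
    exact_mod_cast hcol_le.trans_lt this

theorem strictMonoOn_xEnt {r c : ℕ} {Q : ℕ → ℕ → ℕ} (hQ : IsSYT r c Q) :
    StrictMonoOn (fun p : ℕ × ℕ => xEnt Q p.1 p.2) (Set.Icc (1, 1) (r, c)) :=
  strictMonoOn_grid_of_lt_succ hQ.1 hQ.2.1

theorem strictMonoOn_yEnt (r c : ℕ) (P : ℕ → ℕ → ℕ) :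
    StrictMonoOn (fun p : ℕ × ℕ => yEnt r c P p.1 p.2) (Set.Icc (1, 1) (r, c)) := by
  have hT : 0 < c → IsPartitionShape (toListT r c P) := (isPartitionShape_toListT · P)
  have hlen : (toListT r c P).length = r := by simp [toListT]
  refine strictMonoOn_grid_of_lt_succ (R := r) (C := c) (fun i j hi hj => ?_) (fun i j hi hj => ?_)
  · rw [entryL_evacL (by omega) (by rw [rowLen_toListT, if_pos hi]; omega),
      entryL_evacL (by omega) (by rw [rowLen_toListT, if_pos hi]; omega)]
    exact (hT (by omega)).evacEntry_lt_right (by rw [rowLen_toListT, if_pos hi]; omega)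
  · rw [entryL_evacL (by omega) (by rw [rowLen_toListT, if_pos (by omega)]; omega),
      entryL_evacL (by omega) (by rw [rowLen_toListT, if_pos hi]; omega)]
    exact (hT (by omega)).evacEntry_lt_down (by rw [rowLen_toListT, if_pos hi]; omega)

/-! ### Shadow lines and skeleta -/

section Transport

variable {d d' : ℤ × ℤ → ℤ × ℤ → Prop} (e : ℤ × ℤ ≃ ℤ × ℤ)

theorem minimalsUnder_image (he : ∀ a b, d' (e a) (e b) ↔ d a b) (S : Set (ℤ × ℤ)) :
    minimalsUnder d' (e '' S) = e '' minimalsUnder d S := by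
  ext q
  obtain ⟨p, rfl⟩ := e.surjective q
  simp only [minimalsUnder, Set.mem_image, Set.mem_ofPred_eq, e.injective.eq_iff,
    exists_eq_right, forall_exists_index, and_imp, forall_apply_eq_imp_iff₂, he]

theorem shadowRest_image (he : ∀ a b, d' (e a) (e b) ↔ d a b) (S : Set (ℤ × ℤ)) (m : ℕ) :
    shadowRest d' (e '' S) m = e '' shadowRest d S m := by
  induction m with
  | zero => rfl
  | succ m ih =>
    rw [shadowRest, shadowRest, ih, minimalsUnder_image e he, Set.image_sdiff e.injective]

theorem lineSkeleton_image (he : ∀ a b, d' (e a) (e b) ↔ d a b) (L : Set (ℤ × ℤ)) :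
    lineSkeleton d' (e '' L) = e '' lineSkeleton d L := by
  rw [lineSkeleton, lineSkeleton, ← minimalsUnder_image e he]
  congr 1
  ext q
  obtain ⟨x, rfl⟩ := e.surjective q
  simp only [Set.mem_image, Set.mem_ofPred_eq, e.injective.eq_iff, exists_eq_right,
    exists_exists_and_eq_and, ne_eq, he]

theorem skeleton_image (he : ∀ a b, d' (e a) (e b) ↔ d a b) (S : Set (ℤ × ℤ)) :
    skeleton d' (e '' S) = e '' skeleton d S := by
  simp only [skeleton, shadowLine, Set.image_iUnion, shadowRest_image e he,
    minimalsUnder_image e he, lineSkeleton_image e he]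

end Transport

theorem dirNE_neg_iff (a b : ℤ × ℤ) : dirNE (-a) (-b) ↔ dirSW a b := by
  simp only [dirNE, dirSW, Prod.fst_neg, Prod.snd_neg, neg_le_neg_iff]

theorem minimalsUnder_empty (d : ℤ × ℤ → ℤ × ℤ → Prop) : minimalsUnder d ∅ = ∅ :=
  Set.eq_empty_of_subset_empty fun _ hq => hq.1

theorem lineSkeleton_dirNE_of_staircase {p : ℕ → ℤ × ℤ} {A : ℕ}
    (hfst : ∀ {a a'}, a < a' → a' < A → (p a).1 < (p a').1)
    (hsnd : ∀ {a a'}, a < a' → a' < A → (p a').2 < (p a).2) :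
    lineSkeleton dirNE {q | ∃ a < A, q = p a} =
      {q | ∃ a, a + 1 < A ∧ q = ((p (a + 1)).1, (p a).2)} := by
  have hfst_le : ∀ {a a'}, a < a' → a' < A → (p (a + 1)).1 ≤ (p a').1 := fun h h' =>
    (eq_or_lt_of_le (Nat.succ_le_of_lt h)).elim (fun e => e ▸ le_rfl) fun h'' => (hfst h'' h').le
  have hcovered : {x | ∃ u ∈ {q | ∃ a < A, q = p a}, ∃ v ∈ {q | ∃ a < A, q = p a},
        u ≠ v ∧ dirNE u x ∧ dirNE v x} =
      {x | ∃ a, a + 1 < A ∧ (p (a + 1)).1 ≤ x.1 ∧ (p a).2 ≤ x.2} := by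
    ext x
    constructor
    · rintro ⟨u, ⟨a, ha, rfl⟩, v, ⟨b, hb, rfl⟩, hne, hu, hv⟩
      rcases lt_trichotomy a b with hab | rfl | hab
      · exact ⟨a, by omega, (hfst_le hab hb).trans hv.1, hu.2⟩
      · exact absurd rfl hne
      · exact ⟨b, by omega, (hfst_le hab ha).trans hu.1, hv.2⟩
    · rintro ⟨a, ha, h1, h2⟩
      have hlt := hfst (Nat.lt_succ_self a) ha
      exact ⟨p a, ⟨a, by omega, rfl⟩, p (a + 1), ⟨a + 1, ha, rfl⟩, fun h => hlt.ne (h ▸ rfl),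
        ⟨(hlt.trans_le h1).le, h2⟩, ⟨h1, ((hsnd (Nat.lt_succ_self a) ha).le.trans h2)⟩⟩
  rw [lineSkeleton, hcovered]
  ext q
  constructor
  · rintro ⟨⟨a, ha, h1, h2⟩, hmin⟩
    exact ⟨a, ha, (hmin ((p (a + 1)).1, (p a).2) ⟨a, ha, le_rfl, le_rfl⟩ ⟨h1, h2⟩).symm⟩
  · rintro ⟨a, ha, rfl⟩
    refine ⟨⟨a, ha, le_rfl, le_rfl⟩, ?_⟩
    rintro y ⟨b, hb, hy1, hy2⟩ ⟨hd1, hd2⟩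
    obtain rfl : b = a := by
      rcases lt_trichotomy b a with hba | rfl | hab
      · have := hsnd hba (by omega); omega
      · rfl
      · have := hfst (show a + 1 < b + 1 by omega) hb; omega
    exact Prod.ext (le_antisymm hd1 hy1) (le_antisymm hd2 hy2)

section Layers

variable (pt : ℕ → ℕ → ℤ × ℤ) (A J : ℕ)

def layer (l : ℕ) : Set (ℤ × ℤ) := {q | ∃ a < A, q = pt a l}

def layersFrom (m : ℕ) : Set (ℤ × ℤ) := {q | ∃ a < A, ∃ l, m ≤ l ∧ l < J ∧ q = pt a l}

structure IsNELayering : Prop where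
  fst_lt : ∀ {l a a'}, l < J → a < a' → a' < A → (pt a l).1 < (pt a' l).1
  snd_lt : ∀ {l a a'}, l < J → a < a' → a' < A → (pt a' l).2 < (pt a l).2
  not_dirNE : ∀ {l l' a a'}, l < l' → l' < J → a < A → a' < A → ¬ dirNE (pt a' l') (pt a l)
  exists_lt_succ : ∀ {l a}, l + 1 < J → a < A →
    ∃ b < A, (pt b l).1 < (pt a (l + 1)).1 ∧ (pt b l).2 < (pt a (l + 1)).2

variable {pt A J}

theorem IsNELayering.minimalsUnder_layersFrom (h : IsNELayering pt A J) {m : ℕ} (hm : m < J) :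
    minimalsUnder dirNE (layersFrom pt A J m) = layer pt A m := by
  ext q
  constructor
  · rintro ⟨⟨a, ha, l, hml, hlJ, rfl⟩, hmin⟩
    obtain rfl | hml := eq_or_lt_of_le hml
    · exact ⟨a, ha, rfl⟩
    obtain ⟨l, rfl⟩ := Nat.exists_eq_add_of_lt hml
    obtain ⟨b, hb, hb1, hb2⟩ := h.exists_lt_succ (l := m + l) hlJ ha
    have := hmin (pt b (m + l)) ⟨b, hb, m + l, by omega, by omega, rfl⟩ ⟨hb1.le, hb2.le⟩
    exact absurd (this ▸ hb1) (lt_irrefl _)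
  · rintro ⟨a, ha, rfl⟩
    refine ⟨⟨a, ha, m, le_rfl, hm, rfl⟩, ?_⟩
    rintro _ ⟨a', ha', l', hml', hl'J, rfl⟩ hd
    obtain rfl | hml' := eq_or_lt_of_le hml'
    · rcases lt_trichotomy a' a with haa | rfl | haa
      · exact absurd hd.2 (h.snd_lt hm haa ha).not_ge
      · rfl
      · exact absurd hd.1 (h.fst_lt hm haa ha').not_ge
    · exact absurd hd (h.not_dirNE hml' hl'J ha ha')

theorem layersFrom_eq_empty {m : ℕ} (hm : J ≤ m) : layersFrom pt A J m = ∅ :=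
  Set.eq_empty_of_forall_notMem fun _ ⟨_, _, _, hml, hlJ, _⟩ => by omega

theorem IsNELayering.shadowRest_eq (h : IsNELayering pt A J) (m : ℕ) :
    shadowRest dirNE (layersFrom pt A J 0) m = layersFrom pt A J m := by
  induction m with
  | zero => rfl
  | succ m ih =>
    rw [shadowRest, ih]
    by_cases hm : m < J
    · rw [h.minimalsUnder_layersFrom hm]
      ext q
      constructor
      · rintro ⟨⟨a, ha, l, hml, hlJ, rfl⟩, hnot⟩
        obtain rfl | hml := eq_or_lt_of_le hml
        · exact absurd ⟨a, ha, rfl⟩ hnot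
        · exact ⟨a, ha, l, hml, hlJ, rfl⟩
      · rintro ⟨a, ha, l, hml, hlJ, rfl⟩
        refine ⟨⟨a, ha, l, by omega, hlJ, rfl⟩, ?_⟩
        rintro ⟨a', ha', heq⟩
        exact h.not_dirNE (l := m) (a := a') hml hlJ ha' ha (by rw [heq]; exact ⟨le_rfl, le_rfl⟩)
    · rw [layersFrom_eq_empty (by omega), layersFrom_eq_empty (by omega), Set.empty_sdiff]

theorem IsNELayering.skeleton_eq (h : IsNELayering pt A J) :
    skeleton dirNE (layersFrom pt A J 0) =
      {q | ∃ a, a + 1 < A ∧ ∃ l < J, q = ((pt (a + 1) l).1, (pt a l).2)} := by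
  ext q
  simp only [skeleton, shadowLine, Nat.add_sub_cancel, h.shadowRest_eq, Set.mem_iUnion]
  constructor
  · rintro ⟨l, hq⟩
    by_cases hl : l < J
    · rw [h.minimalsUnder_layersFrom hl, layer,
        lineSkeleton_dirNE_of_staircase (h.fst_lt hl) (h.snd_lt hl)] at hq
      obtain ⟨a, ha, rfl⟩ := hq
      exact ⟨a, ha, l, hl, rfl⟩
    · rw [layersFrom_eq_empty (by omega), minimalsUnder_empty] at hq
      obtain ⟨⟨_, hp, -⟩, -⟩ := hq
      exact hp.elim
  · rintro ⟨a, ha, l, hl, rfl⟩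
    refine ⟨l, ?_⟩
    rw [h.minimalsUnder_layersFrom hl, layer,
      lineSkeleton_dirNE_of_staircase (h.fst_lt hl) (h.snd_lt hl)]
    exact ⟨a, ha, rfl⟩

end Layers

/-! ### The point sets `S_k` -/

def stairSet (x y : ℕ → ℕ → ℤ) (r c k : ℕ) : Set (ℤ × ℤ) :=
  ⋃ j ∈ Set.Icc 1 c, {p | ∃ s t : ℕ, 1 ≤ s ∧ s ≤ r ∧ 1 ≤ t ∧ t ≤ r ∧ s + t - 1 = k ∧
    p = (x s j, y t j)}

theorem mem_stairSet {x y : ℕ → ℕ → ℤ} {r c k : ℕ} {q : ℤ × ℤ} :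
    q ∈ stairSet x y r c k ↔ ∃ j s t, 1 ≤ j ∧ j ≤ c ∧ 1 ≤ s ∧ s ≤ r ∧ 1 ≤ t ∧ t ≤ r ∧
      s + t - 1 = k ∧ q = (x s j, y t j) := by
  simp only [stairSet, Set.mem_iUnion, Set.mem_Icc, Set.mem_ofPred_eq, exists_prop]
  constructor
  · rintro ⟨j, ⟨hj1, hj2⟩, s, t, h⟩
    exact ⟨j, s, t, hj1, hj2, h⟩
  · rintro ⟨j, s, t, hj1, hj2, h⟩
    exact ⟨j, ⟨hj1, hj2⟩, s, t, h⟩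

theorem Sk_eq_stairSet (r c : ℕ) (P Q : ℕ → ℕ → ℕ) :
    Sk r c P Q = stairSet (xEnt Q) (yEnt r c P) r c :=
  rfl

section Stair

variable {x y : ℕ → ℕ → ℤ} {r c k : ℕ}

/-- For `r ≤ k`, the `a`-th point `(x_{sj}, y_{tj})` of `S_k` in column `j = l + 1`, where
`s = k + 1 - r + a` runs from `k + 1 - r` up to `r`. -/
def stairPt (x y : ℕ → ℕ → ℤ) (r k a l : ℕ) : ℤ × ℤ :=
  (x (k + 1 - r + a) (l + 1), y (r - a) (l + 1))

theorem stairSet_eq_layersFrom (hrk : r ≤ k) :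
    stairSet x y r c k = layersFrom (stairPt x y r k) (2 * r - k) c 0 := by
  ext q
  rw [mem_stairSet]
  constructor
  · rintro ⟨j, s, t, hj1, hj2, hs1, hs2, ht1, ht2, hst, rfl⟩
    refine ⟨s - (k + 1 - r), by omega, j - 1, by omega, by omega, ?_⟩
    simp only [stairPt]
    congr 2 <;> omega
  · rintro ⟨a, ha, l, -, hl, rfl⟩
    exact ⟨l + 1, k + 1 - r + a, r - a, by omega, by omega, by omega, by omega, by omega,
      by omega, by omega, rfl⟩

theorem stairSet_succ_eq (hrk : r ≤ k) :
    stairSet x y r c (k + 1) = {q | ∃ a, a + 1 < 2 * r - k ∧ ∃ l < c,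
      q = ((stairPt x y r k (a + 1) l).1, (stairPt x y r k a l).2)} := by
  ext q
  rw [mem_stairSet]
  constructor
  · rintro ⟨j, s, t, hj1, hj2, hs1, hs2, ht1, ht2, hst, rfl⟩
    refine ⟨s - (k + 2 - r), by omega, j - 1, by omega, ?_⟩
    simp only [stairPt]
    congr 2 <;> omega
  · rintro ⟨a, ha, l, hl, rfl⟩
    exact ⟨l + 1, k + 1 - r + (a + 1), r - a, by omega, by omega, by omega, by omega, by omega,
      by omega, by omega, rfl⟩

variable (hx : StrictMonoOn (fun p : ℕ × ℕ => x p.1 p.2) (Set.Icc (1, 1) (r, c)))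
  (hy : StrictMonoOn (fun p : ℕ × ℕ => y p.1 p.2) (Set.Icc (1, 1) (r, c)))
include hx hy

theorem isNELayering_stairPt (hrk : r ≤ k) : IsNELayering (stairPt x y r k) (2 * r - k) c where
  fst_lt _ _ _ := lt_of_strictMonoOn_grid hx (by omega)
  snd_lt _ _ _ := lt_of_strictMonoOn_grid hy (by omega)
  not_dirNE {l l' a a'} hll' hl' ha ha' hd := by
    -- a later point has a larger `x` (if `s ≤ s'`) or a larger `y` (if `t < t'`)
    rcases le_or_gt a a' with haa | haa
    · exact (lt_of_strictMonoOn_grid hx (j := l + 1) (j' := l' + 1) (s := k + 1 - r + a)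
        (s' := k + 1 - r + a') (by omega)).not_ge hd.1
    · exact (lt_of_strictMonoOn_grid hy (j := l + 1) (j' := l' + 1) (s := r - a) (s' := r - a')
        (by omega)).not_ge hd.2
  exists_lt_succ {l a} hl ha :=
    ⟨a, ha, lt_of_strictMonoOn_grid hx (by omega), lt_of_strictMonoOn_grid hy (by omega)⟩

theorem skeleton_dirNE_stairSet (hrk : r ≤ k) :
    skeleton dirNE (stairSet x y r c k) = stairSet x y r c (k + 1) := by
  rw [stairSet_eq_layersFrom hrk, (isNELayering_stairPt hx hy hrk).skeleton_eq,
    stairSet_succ_eq hrk]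

end Stair

def rotNeg (r c : ℕ) (f : ℕ → ℕ → ℤ) (s j : ℕ) : ℤ := -f (r + 1 - s) (c + 1 - j)

theorem strictMonoOn_rotNeg {f : ℕ → ℕ → ℤ} {r c : ℕ}
    (hf : StrictMonoOn (fun p : ℕ × ℕ => f p.1 p.2) (Set.Icc (1, 1) (r, c))) :
    StrictMonoOn (fun p : ℕ × ℕ => rotNeg r c f p.1 p.2) (Set.Icc (1, 1) (r, c)) := by
  rintro ⟨s, j⟩ ⟨⟨hs1, hj1⟩, hs2, hj2⟩ ⟨s', j'⟩ ⟨⟨hs1', hj1'⟩, hs2', hj2'⟩ hlt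
  rw [Prod.mk_lt_mk] at hlt
  exact neg_lt_neg (lt_of_strictMonoOn_grid hf (by omega))

theorem neg_image_stairSet (x y : ℕ → ℕ → ℤ) (r c k : ℕ) :
    Equiv.neg (ℤ × ℤ) '' stairSet x y r c k =
      stairSet (rotNeg r c x) (rotNeg r c y) r c (2 * r - k) := by
  ext q
  simp only [Set.mem_image, mem_stairSet, Equiv.neg_apply]
  constructor
  · rintro ⟨_, ⟨j, s, t, hj1, hj2, hs1, hs2, ht1, ht2, hst, rfl⟩, rfl⟩
    refine ⟨c + 1 - j, r + 1 - s, r + 1 - t, by omega, by omega, by omega, by omega, by omega,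
      by omega, by omega, ?_⟩
    simp only [rotNeg, Prod.neg_mk, show r + 1 - (r + 1 - s) = s by omega,
      show r + 1 - (r + 1 - t) = t by omega, show c + 1 - (c + 1 - j) = j by omega]
  · rintro ⟨j, s, t, hj1, hj2, hs1, hs2, ht1, ht2, hst, rfl⟩
    refine ⟨_, ⟨c + 1 - j, r + 1 - s, r + 1 - t, by omega, by omega, by omega, by omega,
      by omega, by omega, by omega, rfl⟩, ?_⟩
    simp only [rotNeg, Prod.neg_mk]

theorem skeleton_dirSW_stairSet {x y : ℕ → ℕ → ℤ} {r c k : ℕ}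
    (hx : StrictMonoOn (fun p : ℕ × ℕ => x p.1 p.2) (Set.Icc (1, 1) (r, c)))
    (hy : StrictMonoOn (fun p : ℕ × ℕ => y p.1 p.2) (Set.Icc (1, 1) (r, c)))
    (h1k : 1 ≤ k) (hkr : k ≤ r) :
    skeleton dirSW (stairSet x y r c k) = stairSet x y r c (k - 1) := by
  apply Set.image_injective.mpr (Equiv.neg (ℤ × ℤ)).injective
  rw [← skeleton_image _ dirNE_neg_iff, neg_image_stairSet, neg_image_stairSet,
    skeleton_dirNE_stairSet (strictMonoOn_rotNeg hx) (strictMonoOn_rotNeg hy) (by omega)]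
  congr 1
  omega

theorem skeleton_Sk_general (r c : ℕ) (P Q : ℕ → ℕ → ℕ)
    (hQ : IsSYT r c Q) (k : ℕ) :
    (r ≤ k → k ≤ 2 * r - 1 →
      skeleton dirNE (Sk r c P Q k) = Sk r c P Q (k + 1)) ∧
    (1 ≤ k → k ≤ r →
      skeleton dirSW (Sk r c P Q k) = Sk r c P Q (k - 1)) := by
  have hx := strictMonoOn_xEnt hQ
  have hy := strictMonoOn_yEnt r c P
  rw [Sk_eq_stairSet]
  exact ⟨fun hrk _ => skeleton_dirNE_stairSet hx hy hrk,
    fun h1k hkr => skeleton_dirSW_stairSet hx hy h1k hkr⟩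

/-- For `P, Q ∈ SYT(r × c)` and the point sets `S_k` built from entries
of `Q` and `∂(P)` (with `S_0 = S_{2r} = ∅`): for `r ≤ k ≤ 2r - 1` the skeleton satisfies
`𝒮(S_k, ↗) = S_{k+1}`, and for `1 ≤ k ≤ r` the skeleton satisfies `𝒮(S_k, ↙) = S_{k-1}`. -/
theorem skeleton_Sk (r c : ℕ) (P Q : ℕ → ℕ → ℕ)
    (hP : IsSYT r c P) (hQ : IsSYT r c Q) (k : ℕ) :
    (r ≤ k → k ≤ 2 * r - 1 →
      skeleton dirNE (Sk r c P Q k) = Sk r c P Q (k + 1)) ∧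
    (1 ≤ k → k ≤ r →
      skeleton dirSW (Sk r c P Q k) = Sk r c P Q (k - 1)) :=
  skeleton_Sk_general r c P Q hQ k

end PromRS
end
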